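/- arXiv:2206.04451 — 2 statements merged into one kernel-verified Lean document; each statement's English description precedes it below -/
import Mathlib

section
/- Let N be an unrooted binary phylogenetic network on X that displays two unrooted binary phylogenetic trees T and T' on X that cannot be reduced under any of Reductions 1–8, and let G be the generator underlying N. Then, for any choice of spanning trees R and R' of N extending images of T and T' respectively, G has at most one 1|3 side. -/
/-!  Basic formalization of unrooted binary phylogenetic trees, chains, cherries,
agreement forests, TBR distance, reduction rules 1-10, phylogenetic networks,
generators (encoded via their sides inside the network), and breakpoint sides. -/

structure PhyloTree (X : Type) : Type 1 where
  V : Type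
  graph : SimpleGraph V
  finV : Finite V
  isTree : graph.IsTree
  leaf : X → V
  leaf_inj : Function.Injective leaf
  deg_leaf : ∀ x : X, (graph.neighborSet (leaf x)).ncard = 1
  deg_internal : ∀ v : V, v ∉ Set.range leaf → (graph.neighborSet v).ncard = 3

namespace PhyloTree

variable {X : Type}

/-- The unique neighbour `p_x` of the leaf labelled `x`. -/
noncomputable def parent (T : PhyloTree X) (x : X) : T.V :=
  (Set.ncard_eq_one.mp (T.deg_leaf x)).choose

/-- `{a,b}` is a cherry: two distinct leaves with a common neighbour. -/
def cherry (T : PhyloTree X) (a b : X) : Prop :=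
  a ≠ b ∧ T.parent a = T.parent b

/-- `l = (l₁,…,lₙ)` is an `n`-chain of `T` (n = l.length ≥ 2): the parents form a
walk (consecutive parents equal or adjacent) whose interior parents are pairwise
distinct. -/
def isChain (T : PhyloTree X) (l : List X) : Prop :=
  2 ≤ l.length ∧ l.Nodup ∧
  (∀ (i : ℕ) (x y : X), l[i]? = some x → l[i + 1]? = some y →
    T.parent x = T.parent y ∨ T.graph.Adj (T.parent x) (T.parent y)) ∧
  (∀ (i j : ℕ) (x y : X), 1 ≤ i → i < j → j + 1 < l.length →
    l[i]? = some x → l[j]? = some y → T.parent x ≠ T.parent y)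

def frontPendant (T : PhyloTree X) (l : List X) : Prop :=
  ∃ x y : X, l[0]? = some x ∧ l[1]? = some y ∧ T.parent x = T.parent y

/-- A chain is pendant if its first two or last two members have equal parents. -/
def pendantChain (T : PhyloTree X) (l : List X) : Prop :=
  T.isChain l ∧ (T.frontPendant l ∨ T.frontPendant l.reverse)

/-- Vertices of the embedding `T[B]`: all vertices on paths between leaves of `B`. -/
def embVerts (T : PhyloTree X) (B : Set X) : Set T.V :=
  {v | ∃ a ∈ B, ∃ b ∈ B, ∃ p : T.graph.Walk (T.leaf a) (T.leaf b), p.IsPath ∧ v ∈ p.support}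

/-- Edges of the embedding `T[B]` (the edges "used by" `T[B]`). -/
def embEdges (T : PhyloTree X) (B : Set X) : Set (Sym2 T.V) :=
  {e | ∃ a ∈ B, ∃ b ∈ B, ∃ p : T.graph.Walk (T.leaf a) (T.leaf b), p.IsPath ∧ e ∈ p.edges}

/-- The quartet `ab|cd` is displayed by `T`. -/
def quartet (T : PhyloTree X) (a b c d : X) : Prop :=
  Disjoint (T.embVerts {a, b}) (T.embVerts {c, d})

/-- `Y` is the leaf set of a pendant subtree of `T`: deleting a single edge
detaches exactly the leaves of `Y`. -/
def pendantSet (T : PhyloTree X) (Y : Set X) : Prop :=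
  ∃ v w : T.V, T.graph.Adj v w ∧
    Y = {x : X | (T.graph.deleteEdges {s(v, w)}).Reachable (T.leaf x) v}

end PhyloTree

/-- The restrictions `T|B` and `T'|B` coincide (expressed via quartets, which
determine binary trees). -/
def restrictEqOn {X : Type} (T T' : PhyloTree X) (B : Set X) : Prop :=
  ∀ a ∈ B, ∀ b ∈ B, ∀ c ∈ B, ∀ d ∈ B, Function.Injective ![a, b, c, d] →
    (T.quartet a b c d ↔ T'.quartet a b c d)

/-- `T` and `T'` are the same phylogenetic tree (equal up to label-preserving
isomorphism). -/
def PhyloTree.equivT {X : Type} (T T' : PhyloTree X) : Prop :=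
  restrictEqOn T T' Set.univ

/-- `T'` is obtainable from `T` by a single TBR operation: there is a bipartition
of `X` which is an edge split of both trees and on both of whose parts the two
trees agree. -/
def TBRStep {X : Type} (T T' : PhyloTree X) : Prop :=
  ∃ A : Set X, A.Nonempty ∧ Aᶜ.Nonempty ∧ T.pendantSet A ∧ T'.pendantSet A ∧
    restrictEqOn T T' A ∧ restrictEqOn T T' Aᶜ

/-- The TBR distance: the minimum number of TBR operations transforming `T` into `T'`. -/
noncomputable def dTBR {X : Type} (T T' : PhyloTree X) : ℕ :=
  sInf {k : ℕ | ∃ f : ℕ → PhyloTree X, (f 0).equivT T ∧ (f k).equivT T' ∧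
    ∀ i : ℕ, i < k → TBRStep (f i) (f (i + 1))}

/-- `F` is an agreement forest for `T` and `T'`. -/
def AgreementForest {X : Type} (T T' : PhyloTree X) (F : Set (Set X)) : Prop :=
  (∀ B ∈ F, B.Nonempty) ∧ (∀ x : X, ∃ B ∈ F, x ∈ B) ∧
  (∀ B ∈ F, ∀ B' ∈ F, B ≠ B' → Disjoint B B') ∧
  (∀ B ∈ F, restrictEqOn T T' B) ∧
  (∀ B ∈ F, ∀ B' ∈ F, B ≠ B' → Disjoint (T.embVerts B) (T.embVerts B')) ∧
  (∀ B ∈ F, ∀ B' ∈ F, B ≠ B' → Disjoint (T'.embVerts B) (T'.embVerts B'))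

/-- `F` is a maximum agreement forest (minimum number of components). -/
def IsMAF {X : Type} (T T' : PhyloTree X) (F : Set (Set X)) : Prop :=
  AgreementForest T T' F ∧
  ∀ F' : Set (Set X), AgreementForest T T' F' → F.ncard ≤ F'.ncard

/-- `Y` is preserved in the forest `F`. -/
def preservedIn {X : Type} (F : Set (Set X)) (Y : Set X) : Prop :=
  ∃ B ∈ F, Y ⊆ B

/-- `l` is a common chain of `T` and `T'`. -/
def commonChain {X : Type} (T T' : PhyloTree X) (l : List X) : Prop :=
  T.isChain l ∧ T'.isChain l

/-- A CPT-eligible common chain exists: a common `n`-chain with `n ≥ 3`, or a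
common 2-chain pendant in at least one tree. -/
def CPTEligibleChain {X : Type} (T T' : PhyloTree X) : Prop :=
  (∃ l : List X, 3 ≤ l.length ∧ commonChain T T' l) ∨
  (∃ a b : X, commonChain T T' [a, b] ∧ (T.cherry a b ∨ T'.cherry a b))

/-! ### Applicability of Reductions 1–7 -/

def Red1App {X : Type} (T T' : PhyloTree X) : Prop :=
  ∃ Y : Set X, 2 ≤ Y.ncard ∧ T.pendantSet Y ∧ T'.pendantSet Y ∧ restrictEqOn T T' Y

def Red2App {X : Type} (T T' : PhyloTree X) : Prop :=
  ∃ l : List X, 4 ≤ l.length ∧ commonChain T T' l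

def Red3App {X : Type} (T T' : PhyloTree X) : Prop :=
  ∃ a b c : X, commonChain T T' [a, b, c] ∧ T.cherry a b ∧ T'.cherry b c

def Red4App {X : Type} (T T' : PhyloTree X) : Prop :=
  ∃ a b c x : X, commonChain T T' [a, b, c] ∧ T.cherry b c ∧ T'.cherry c x ∧
    x ≠ a ∧ x ≠ b ∧ x ≠ c

def Red5App {X : Type} (T T' : PhyloTree X) : Prop :=
  ∃ a b c d x : X, commonChain T T' [a, b] ∧ commonChain T T' [c, d] ∧
    T.cherry b x ∧ T.cherry c d ∧ T'.cherry a b ∧ T'.cherry d x ∧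
    x ≠ a ∧ x ≠ b ∧ x ≠ c ∧ x ≠ d

def Red6App {X : Type} (T T' : PhyloTree X) : Prop :=
  ∃ a b c d e f : X, commonChain T T' [a, b, c] ∧ commonChain T T' [d, e, f] ∧
    T.cherry b c ∧ T.cherry d e ∧ T'.isChain [a, b, c, d, e, f]

def Red7App {X : Type} (T T' : PhyloTree X) : Prop :=
  ∃ a b c d e : X, commonChain T T' [a, b, c] ∧ commonChain T T' [d, e] ∧
    T.cherry b c ∧ T.cherry d e ∧ T'.isChain [a, b, c, d, e]

/-- The pair (T,T') cannot be reduced by any of Reductions 1–7 (in either orientation). -/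
def Irred7 {X : Type} (T T' : PhyloTree X) : Prop :=
  ¬ Red1App T T' ∧ ¬ Red2App T T' ∧
  ¬ Red3App T T' ∧ ¬ Red3App T' T ∧
  ¬ Red4App T T' ∧ ¬ Red4App T' T ∧
  ¬ Red5App T T' ∧ ¬ Red5App T' T ∧
  ¬ Red6App T T' ∧ ¬ Red6App T' T ∧
  ¬ Red7App T T' ∧ ¬ Red7App T' T

/-! ### Reduction 8 -/

/-- The configuration needed for Reduction 8A: leaf-disjoint common 3-chains
`C=(b,c,d)` and `D=(e,f,g)`, `C` pendant in `T'` with cherry `{b,c}`, `C` not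
pendant in `T`, and `(a,b,c,d)` a chain of `T` but not of `T'`. -/
def Red8AData {X : Type} (T T' : PhyloTree X) (a b c d e f g : X) : Prop :=
  commonChain T T' [b, c, d] ∧ commonChain T T' [e, f, g] ∧
  Disjoint ({b, c, d} : Set X) ({e, f, g} : Set X) ∧
  T'.cherry b c ∧ ¬ T.pendantChain [b, c, d] ∧
  T.isChain [a, b, c, d] ∧ ¬ T'.isChain [a, b, c, d]

def Red8App {X : Type} (T T' : PhyloTree X) : Prop :=
  ∃ a b c d e f g : X, Red8AData T T' a b c d e f g ∨ Red8AData T' T a b c d e f g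

def Irred8 {X : Type} (T T' : PhyloTree X) : Prop :=
  Irred7 T T' ∧ ¬ Red8App T T'

/-! ### Operation P, Reductions 9 and 10 -/

def eligiblePOriented {X : Type} (T T' : PhyloTree X) (a b c d : X) : Prop :=
  T.isChain [a, b, c, d] ∧ ¬ T.pendantChain [a, b, c, d] ∧
  T'.cherry a b ∧ T'.cherry c d ∧
  ∃ F : Set (Set X), IsMAF T T' F ∧ preservedIn F {a, b} ∧ preservedIn F {c, d} ∧
    ¬ preservedIn F {a, b, c, d}

/-- `{a,b,c,d}` is eligible for Operation P (after possibly swapping T and T'). -/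
def eligibleP {X : Type} (T T' : PhyloTree X) (a b c d : X) : Prop :=
  eligiblePOriented T T' a b c d ∨ eligiblePOriented T' T a b c d

/-- Result of Operation P applied to `{a,b,c,d}` (with chain in `T`, cherries in `T'`). -/
def OpPResult {X : Type} (T T' : PhyloTree X) (a b c d : X) (S S' : PhyloTree X) : Prop :=
  eligiblePOriented T T' a b c d ∧
  S.equivT T ∧
  (∀ p q r t : X, p ≠ b → q ≠ b → r ≠ b → t ≠ b → Function.Injective ![p, q, r, t] →
    (S'.quartet p q r t ↔ T'.quartet p q r t)) ∧
  S'.cherry b c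

def Red91App {X : Type} (T T' : PhyloTree X) : Prop :=
  ∃ a b c d a' b' c' d' : X,
    commonChain T T' [b, c, d] ∧ T'.cherry b c ∧ ¬ T.pendantChain [b, c, d] ∧
    T.isChain [a, b, c, d] ∧ ¬ T'.isChain [a, b, c, d] ∧
    Disjoint ({a, b, c, d} : Set X) ({a', b', c', d'} : Set X) ∧
    eligibleP T T' a' b' c' d'

def Red92App {X : Type} (T T' : PhyloTree X) : Prop :=
  ∃ a b c d a' b' c' d' : X,
    Disjoint ({a, b, c, d} : Set X) ({a', b', c', d'} : Set X) ∧
    eligibleP T T' a b c d ∧ eligibleP T T' a' b' c' d'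

def Red9App {X : Type} (T T' : PhyloTree X) : Prop :=
  Red91App T T' ∨ Red91App T' T ∨ Red92App T T'

def Irred9 {X : Type} (T T' : PhyloTree X) : Prop :=
  Irred8 T T' ∧ ¬ Red9App T T'

def eligibleR10Oriented {X : Type} (T T' : PhyloTree X) (a b c d : X) : Prop :=
  T.cherry a b ∧ T.cherry c d ∧ T'.isChain [a, b, c] ∧ T'.cherry b c ∧
  d ≠ a ∧ d ≠ b ∧ d ≠ c ∧
  ∃ F : Set (Set X), IsMAF T T' F ∧ ({c} : Set X) ∈ F

/-- `{a,b,c,d}` is eligible for Reduction 10 (after possibly swapping T and T'). -/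
def eligibleR10 {X : Type} (T T' : PhyloTree X) (a b c d : X) : Prop :=
  eligibleR10Oriented T T' a b c d ∨ eligibleR10Oriented T' T a b c d

def Red10App {X : Type} (T T' : PhyloTree X) : Prop :=
  ∃ a b c d : X, eligibleR10 T T' a b c d

def Irred10 {X : Type} (T T' : PhyloTree X) : Prop :=
  Irred9 T T' ∧ ¬ Red10App T T'

/-! ### Restrictions and Reduction results across taxon sets -/

/-- `S` is (equal to) the restriction `T|X'` of `T` to `X' ⊆ X`. -/
def IsRestrictionOf {X : Type} (T : PhyloTree X) (X' : Set X) (S : PhyloTree ↥X') : Prop :=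
  ∀ a b c d : ↥X', Function.Injective ![a, b, c, d] →
    (S.quartet a b c d ↔ T.quartet a.1 b.1 c.1 d.1)

/-- `S` is obtained from `T` by replacing the pendant subtree on leaf set `Y`
by a single new leaf (Reduction 1 applied to `Y`). -/
def ReplacedBy {X : Type} (T : PhyloTree X) (Y : Set X)
    (S : PhyloTree (↥(Yᶜ) ⊕ Unit)) : Prop :=
  ∃ y ∈ Y, ∀ a b c d : ↥(Yᶜ) ⊕ Unit, Function.Injective ![a, b, c, d] →
    (S.quartet a b c d ↔
      T.quartet (Sum.elim Subtype.val (fun _ => y) a) (Sum.elim Subtype.val (fun _ => y) b)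
        (Sum.elim Subtype.val (fun _ => y) c) (Sum.elim Subtype.val (fun _ => y) d))

/-- `(a,b,c,d)` is an interrupted 4-chain of `T` and `T'` with interrupter `{u,v}`:
it is a chain of `T` and in `T'` there is a walk `p_a,p_b,v,p_c,p_d` with
`p_b, v, p_c` pairwise distinct; `u` is the neighbour of `v` off the walk. -/
def Interrupted4 {X : Type} (T T' : PhyloTree X) (a b c d : X) (u v : T'.V) : Prop :=
  T.isChain [a, b, c, d] ∧
  (T'.parent a = T'.parent b ∨ T'.graph.Adj (T'.parent a) (T'.parent b)) ∧
  T'.graph.Adj (T'.parent b) v ∧ T'.graph.Adj v (T'.parent c) ∧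
  (T'.parent c = T'.parent d ∨ T'.graph.Adj (T'.parent c) (T'.parent d)) ∧
  v ≠ T'.parent b ∧ v ≠ T'.parent c ∧ T'.parent b ≠ T'.parent c ∧
  T'.graph.Adj u v ∧ u ≠ T'.parent b ∧ u ≠ T'.parent c

/-- The pair `(Tr, Tr')` (on `X ⊕ Unit`, the extra label being the new taxon `g'`)
is a result of applying Reduction 8A to `T, T'` with data `a,b,c,d,e,f,g`. -/
def Red8AResult {X : Type} (T T' : PhyloTree X) (a b c d e f g : X)
    (Tr Tr' : PhyloTree (X ⊕ Unit)) : Prop :=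
  Red8AData T T' a b c d e f g ∧
  -- `Tr'` is `T'` with the chain `(e,f,g)` extended to `(e,f,g,g')`:
  (∀ p q r t : X, Function.Injective ![p, q, r, t] →
    (Tr'.quartet (Sum.inl p) (Sum.inl q) (Sum.inl r) (Sum.inl t) ↔ T'.quartet p q r t)) ∧
  Tr'.isChain [Sum.inl e, Sum.inl f, Sum.inl g, Sum.inr ()] ∧
  -- `Tr` is obtained from `T` by moving the component `A` containing `b,c,d`
  -- (cut off at the edge `{p_a,p_b}`) onto a subdivision of the edge `{p_f,p_g}`
  -- of the chain `(e,f,g,g')`: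
  ∃ A : Set X,
    A = {x : X | (T.graph.deleteEdges {s(T.parent a, T.parent b)}).Reachable
          (T.leaf x) (T.parent b)} ∧
    (∀ p ∈ A, ∀ q ∈ A, ∀ r ∈ A, ∀ t ∈ A, Function.Injective ![p, q, r, t] →
      (Tr.quartet (Sum.inl p) (Sum.inl q) (Sum.inl r) (Sum.inl t) ↔ T.quartet p q r t)) ∧
    (∀ p ∈ Aᶜ, ∀ q ∈ Aᶜ, ∀ r ∈ Aᶜ, ∀ t ∈ Aᶜ, Function.Injective ![p, q, r, t] →
      (Tr.quartet (Sum.inl p) (Sum.inl q) (Sum.inl r) (Sum.inl t) ↔ T.quartet p q r t)) ∧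
    Tr.pendantChain [Sum.inl b, Sum.inl c, Sum.inl d] ∧
    ∃ u v : Tr.V,
      Interrupted4 Tr' Tr (Sum.inl e) (Sum.inl f) (Sum.inl g) (Sum.inr ()) u v ∧
      {z : X ⊕ Unit | (Tr.graph.deleteEdges {s(u, v)}).Reachable (Tr.leaf z) u}
        = Sum.inl '' A

/-! ### Phylogenetic networks, display, generators and sides -/

structure PhyloNetwork (X : Type) : Type 1 where
  V : Type
  graph : SimpleGraph V
  finV : Finite V
  conn : graph.Connected
  leaf : X → V
  leaf_inj : Function.Injective leaf
  deg_leaf : ∀ x : X, (graph.neighborSet (leaf x)).ncard = 1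
  deg_internal : ∀ v : V, v ∉ Set.range leaf → (graph.neighborSet v).ncard = 3

namespace PhyloNetwork

variable {X : Type}

/-- The reticulation number `r(N) = |E| - (|V| - 1)`. -/
noncomputable def retic (N : PhyloNetwork X) : ℕ :=
  N.graph.edgeSet.ncard - (Nat.card N.V - 1)

noncomputable def parent (N : PhyloNetwork X) (x : X) : N.V :=
  (Set.ncard_eq_one.mp (N.deg_leaf x)).choose

end PhyloNetwork

/-- An image of the tree `T` in the network `N`: a subdivision of `T` inside `N`. -/
structure TreeImage {X : Type} (T : PhyloTree X) (N : PhyloNetwork X) : Type where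
  emb : T.V → N.V
  inj : Function.Injective emb
  leaf_map : ∀ x : X, emb (T.leaf x) = N.leaf x
  walk : ∀ ⦃u v : T.V⦄, T.graph.Adj u v → N.graph.Walk (emb u) (emb v)
  walk_isPath : ∀ ⦃u v : T.V⦄ (h : T.graph.Adj u v), (walk h).IsPath
  walk_symm : ∀ ⦃u v : T.V⦄ (h : T.graph.Adj u v), walk h.symm = (walk h).reverse
  internally_disjoint : ∀ ⦃u v : T.V⦄ (h : T.graph.Adj u v) ⦃u' v' : T.V⦄
    (h' : T.graph.Adj u' v'), s(u, v) ≠ s(u', v') → ∀ z : N.V,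
      z ∈ (walk h).support → z ∈ (walk h').support → z = emb u' ∨ z = emb v'

/-- `N` displays `T`. -/
def Displays {X : Type} (N : PhyloNetwork X) (T : PhyloTree X) : Prop :=
  Nonempty (TreeImage T N)

def TreeImage.edges {X : Type} {T : PhyloTree X} {N : PhyloNetwork X}
    (I : TreeImage T N) : Set (Sym2 N.V) :=
  {e | ∃ (u v : T.V) (h : T.graph.Adj u v), e ∈ (I.walk h).edges}

/-- A spanning tree of `N` (given by its edge set `R`) obtained by greedily
extending an image of `T`. -/
structure SpanExt {X : Type} (T : PhyloTree X) (N : PhyloNetwork X) : Type where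
  img : TreeImage T N
  R : Set (Sym2 N.V)
  sub : R ⊆ N.graph.edgeSet
  extends_img : img.edges ⊆ R
  isTree : (SimpleGraph.fromEdgeSet R).IsTree

/-- A vertex of `N` which is a vertex of the underlying generator: an internal
vertex not adjacent to any leaf. -/
def genVertex {X : Type} (N : PhyloNetwork X) (v : N.V) : Prop :=
  v ∉ Set.range N.leaf ∧ ∀ x : X, ¬ N.graph.Adj v (N.leaf x)

/-- A side of the generator underlying `N`, encoded by its associated path
`P_S` in `N`: a walk between generator vertices all of whose internal vertices
are parents of leaves. -/
structure NSide {X : Type} (N : PhyloNetwork X) : Type where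
  u : N.V
  w : N.V
  walk : N.graph.Walk u w
  len_pos : 0 < walk.length
  gu : genVertex N u
  gw : genVertex N w
  internal : ∀ v ∈ walk.support, v ≠ u → v ≠ w → ¬ genVertex N v ∧ v ∉ Set.range N.leaf
  nodup : walk.support.tail.Nodup
  no_return : u = w ∨ u ∉ walk.support.tail

namespace NSide

variable {X : Type} {N : PhyloNetwork X}

/-- The taxa attached to (decorating) the side. -/
def taxa (S : NSide N) : Set X :=
  {x : X | ∃ v ∈ S.walk.support, N.graph.Adj v (N.leaf x)}

def edgeSet (S : NSide N) : Set (Sym2 N.V) := {e | e ∈ S.walk.edges}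

def incident (S : NSide N) (v : N.V) : Prop := S.u = v ∨ S.w = v

def isLoop (S : NSide N) : Prop := S.u = S.w

def sameEnds (S S' : NSide N) : Prop := ({S.u, S.w} : Set N.V) = {S'.u, S'.w}

/-- The side is a simple edge of the generator: not a loop, and no other
(parallel) side has the same endpoints. -/
def isSimple (S : NSide N) : Prop :=
  S.u ≠ S.w ∧ ∀ S' : NSide N, S.sameEnds S' → S'.edgeSet = S.edgeSet

end NSide

/-- The spanning tree with edge set `R` omits some edge of the side (has a
breakpoint on the side). -/
def omitsOn {X : Type} {N : PhyloNetwork X} (R : Set (Sym2 N.V)) (S : NSide N) : Prop :=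
  ∃ e ∈ S.walk.edges, e ∉ R

def coversSide {X : Type} {N : PhyloNetwork X} (R : Set (Sym2 N.V)) (S : NSide N) : Prop :=
  ∀ e ∈ S.walk.edges, e ∈ R

def omitsOnly {X : Type} {N : PhyloNetwork X} (R : Set (Sym2 N.V)) (S : NSide N)
    (e₀ : Sym2 N.V) : Prop :=
  e₀ ∉ R ∧ ∀ e ∈ S.walk.edges, e ≠ e₀ → e ∈ R

/-- `S` is a `1|3` side `a|bcd` relative to the spanning trees `R, R'`. -/
def Side13 {X : Type} {N : PhyloNetwork X} (R R' : Set (Sym2 N.V)) (S : NSide N)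
    (a b c d : X) : Prop :=
  S.walk.support = [S.u, N.parent a, N.parent b, N.parent c, N.parent d, S.w] ∧
  ((omitsOnly R S s(N.parent a, N.parent b) ∧ coversSide R' S) ∨
   (omitsOnly R' S s(N.parent a, N.parent b) ∧ coversSide R S))

/-- `S` is a `2|2` side `ab|cd` relative to the spanning trees `R, R'`. -/
def Side22 {X : Type} {N : PhyloNetwork X} (R R' : Set (Sym2 N.V)) (S : NSide N)
    (a b c d : X) : Prop :=
  S.walk.support = [S.u, N.parent a, N.parent b, N.parent c, N.parent d, S.w] ∧
  ((omitsOnly R S s(N.parent b, N.parent c) ∧ coversSide R' S) ∨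
   (omitsOnly R' S s(N.parent b, N.parent c) ∧ coversSide R S))

/-- `S` is a `2|1|1` side `ab|c|d` relative to the spanning trees `R, R'`. -/
def Side211 {X : Type} {N : PhyloNetwork X} (R R' : Set (Sym2 N.V)) (S : NSide N)
    (a b c d : X) : Prop :=
  S.walk.support = [S.u, N.parent a, N.parent b, N.parent c, N.parent d, S.w] ∧
  ((omitsOnly R S s(N.parent b, N.parent c) ∧ omitsOnly R' S s(N.parent c, N.parent d)) ∨
   (omitsOnly R' S s(N.parent b, N.parent c) ∧ omitsOnly R S s(N.parent c, N.parent d)))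

/-- `S` is a `1|1|1` side relative to the spanning trees `R, R'`. -/
def Side111 {X : Type} {N : PhyloNetwork X} (R R' : Set (Sym2 N.V)) (S : NSide N) : Prop :=
  ∃ a b c : X,
    S.walk.support = [S.u, N.parent a, N.parent b, N.parent c, S.w] ∧
    ((omitsOnly R S s(N.parent a, N.parent b) ∧ omitsOnly R' S s(N.parent b, N.parent c)) ∨
     (omitsOnly R' S s(N.parent a, N.parent b) ∧ omitsOnly R S s(N.parent b, N.parent c)))


open SimpleGraph

section ObsAux

variable {V : Type*} {G : SimpleGraph V}

lemma obs_adj_of_walk : ∀ {u v : V}, G.Walk u v → u ≠ v → ∃ z, G.Adj u z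
  | _, _, .nil, h => absurd rfl h
  | _, _, .cons h _, _ => ⟨_, h⟩

lemma obs_closure (P : Set V) (hcl : ∀ ⦃v w : V⦄, G.Adj v w → v ∈ P → w ∈ P) :
    ∀ {u v : V}, G.Walk u v → u ∈ P → v ∈ P
  | _, _, .nil, h => h
  | _, _, .cons ha p, h => obs_closure P hcl p (hcl ha h)

lemma obs_one_le_length : ∀ {u v : V} (p : G.Walk u v), u ≠ v → 1 ≤ p.length
  | _, _, .nil, h => absurd rfl h
  | _, _, .cons _ _, _ => Nat.succ_le_succ (Nat.zero_le _)

lemma obs_support_of_length_one : ∀ {u v : V} (p : G.Walk u v), p.length = 1 → p.support = [u, v]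
  | _, _, .nil, h => by simp at h
  | _, _, .cons _ p, h => by
      cases p with
      | nil => simp
      | cons _ _ => simp [SimpleGraph.Walk.length_cons] at h

lemma obs_first_edge {u v : V} (p : G.Walk u v) {z : V} {l : List V}
    (h : p.support = u :: z :: l) : s(u, z) ∈ p.edges := by
  cases p with
  | nil => simp at h
  | cons hadj p =>
    rename_i m
    have hs : p.support = z :: l := by simpa using h
    have hm : m = z := by
      have h2 := p.support_eq_cons
      rw [hs] at h2
      exact (List.cons.injEq _ _ _ _ ▸ h2).1.symm
    subst hm
    simp

lemma obs_edges_of_support6 : ∀ {u w : V} (p : G.Walk u w) {v0 v1 v2 v3 v4 v5 : V},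
    p.support = [v0, v1, v2, v3, v4, v5] →
    p.edges = [s(v0, v1), s(v1, v2), s(v2, v3), s(v3, v4), s(v4, v5)]
  | _, _, .nil, _, _, _, _, _, _, h => by simp at h
  | _, _, .cons _ p, v0, v1, v2, v3, v4, v5, h => by
      simp only [SimpleGraph.Walk.support_cons, List.cons.injEq] at h
      obtain ⟨rfl, h⟩ := h
      cases p with
      | nil => simp at h
      | cons h2 p =>
        simp only [SimpleGraph.Walk.support_cons, List.cons.injEq] at h
        obtain ⟨rfl, h⟩ := h
        cases p with
        | nil => simp at h
        | cons h3 p =>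
          simp only [SimpleGraph.Walk.support_cons, List.cons.injEq] at h
          obtain ⟨rfl, h⟩ := h
          cases p with
          | nil => simp at h
          | cons h4 p =>
            simp only [SimpleGraph.Walk.support_cons, List.cons.injEq] at h
            obtain ⟨rfl, h⟩ := h
            cases p with
            | nil => simp at h
            | cons h5 p =>
              simp only [SimpleGraph.Walk.support_cons, List.cons.injEq] at h
              obtain ⟨rfl, h⟩ := h
              cases p with
              | nil =>
                simp only [SimpleGraph.Walk.support_nil, List.cons.injEq, and_true] at h
                subst h
                simp
              | cons h6 p => simp at h

lemma obs_nbhd_three [Finite V] {v x y z : V} (hdeg : (G.neighborSet v).ncard = 3)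
    (hxy : x ≠ y) (hxz : x ≠ z) (hyz : y ≠ z)
    (hx : G.Adj v x) (hy : G.Adj v y) (hz : G.Adj v z) :
    G.neighborSet v = {x, y, z} := by
  have hsub : ({x, y, z} : Set V) ⊆ G.neighborSet v := by
    intro t ht
    rcases ht with rfl | rfl | rfl <;> assumption
  have h3 : ({x, y, z} : Set V).ncard = 3 :=
    Set.ncard_eq_three.mpr ⟨x, y, z, hxy, hxz, hyz, rfl⟩
  exact (Set.eq_of_subset_of_ncard_le hsub (by rw [hdeg, h3]) (Set.toFinite _)).symm

lemma obs_triple_match {α : Type*} (P : α → Prop) {p q r p' q' r' : α}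
    (h : ({p, q, r} : Set α) = {p', q', r'}) (hpq : p ≠ q) (hpq' : p' ≠ q')
    (hp : P p) (hq : P q) (hp' : P p') (hq' : P q') (hr : ¬ P r) (hr' : ¬ P r') :
    (p = p' ∧ q = q') ∨ (p = q' ∧ q = p') := by
  have hmem : ∀ t : α, P t → t ∈ ({p', q', r'} : Set α) → t = p' ∨ t = q' := by
    intro t hPt ht
    rcases ht with rfl | rfl | rfl
    · exact Or.inl rfl
    · exact Or.inr rfl
    · exact absurd hPt hr'
  have hp2 : p = p' ∨ p = q' := hmem p hp (h ▸ (by simp : p ∈ ({p, q, r} : Set α)))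
  have hq2 : q = p' ∨ q = q' := hmem q hq (h ▸ (by simp : q ∈ ({p, q, r} : Set α)))
  rcases hp2 with rfl | rfl
  · rcases hq2 with rfl | rfl
    · exact absurd rfl hpq
    · exact Or.inl ⟨rfl, rfl⟩
  · rcases hq2 with rfl | rfl
    · exact Or.inr ⟨rfl, rfl⟩
    · exact absurd rfl hpq

end ObsAux
section ObsTreeBasics

variable {X : Type}

lemma PhyloTree.parent_spec (T : PhyloTree X) (x : X) :
    T.graph.neighborSet (T.leaf x) = {T.parent x} :=
  (Set.ncard_eq_one.mp (T.deg_leaf x)).choose_spec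

lemma PhyloTree.adj_parent (T : PhyloTree X) (x : X) :
    T.graph.Adj (T.leaf x) (T.parent x) := by
  have h := T.parent_spec x
  have : T.parent x ∈ T.graph.neighborSet (T.leaf x) := by rw [h]; exact Set.mem_singleton _
  exact this

lemma PhyloTree.adj_leaf_eq (T : PhyloTree X) {x : X} {v : T.V}
    (h : T.graph.Adj (T.leaf x) v) : v = T.parent x := by
  have : v ∈ T.graph.neighborSet (T.leaf x) := h
  rwa [T.parent_spec x, Set.mem_singleton_iff] at this

lemma PhyloTree.parent_eq_leaf_forces (T : PhyloTree X) {s y : X}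
    (h : T.parent s = T.leaf y) : ∀ z : X, z = s ∨ z = y := by
  intro z
  have hadj : T.graph.Adj (T.leaf s) (T.leaf y) := h ▸ T.adj_parent s
  have hpy : T.parent y = T.leaf s := (T.adj_leaf_eq hadj.symm).symm
  have hcl : ∀ ⦃v w : T.V⦄, T.graph.Adj v w →
      v ∈ ({T.leaf s, T.leaf y} : Set T.V) → w ∈ ({T.leaf s, T.leaf y} : Set T.V) := by
    intro v w hvw hv
    rcases hv with rfl | rfl
    · right; simp [T.adj_leaf_eq hvw, h]
    · left; simp [T.adj_leaf_eq hvw, hpy]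
  obtain ⟨p⟩ := T.isTree.isConnected.preconnected (T.leaf s) (T.leaf z)
  have hz : T.leaf z ∈ ({T.leaf s, T.leaf y} : Set T.V) :=
    obs_closure _ hcl p (Or.inl rfl)
  rcases hz with hz | hz
  · exact Or.inl (T.leaf_inj hz)
  · exact Or.inr (T.leaf_inj hz)

lemma PhyloTree.parent_not_leaf (T : PhyloTree X) {a b c : X}
    (hab : a ≠ b) (hac : a ≠ c) (hbc : b ≠ c) :
    ∀ s : X, T.parent s ∉ Set.range T.leaf := by
  rintro s ⟨y, hy⟩
  have hf := T.parent_eq_leaf_forces hy.symm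
  rcases hf a with rfl | rfl <;> rcases hf b with h1 | h1 <;> rcases hf c with h2 | h2 <;>
    simp_all

lemma PhyloNetwork.parent_spec (N : PhyloNetwork X) (x : X) :
    N.graph.neighborSet (N.leaf x) = {N.parent x} :=
  (Set.ncard_eq_one.mp (N.deg_leaf x)).choose_spec

lemma PhyloNetwork.adj_parent (N : PhyloNetwork X) (x : X) :
    N.graph.Adj (N.leaf x) (N.parent x) := by
  have h := N.parent_spec x
  have : N.parent x ∈ N.graph.neighborSet (N.leaf x) := by rw [h]; exact Set.mem_singleton _
  exact this

lemma PhyloNetwork.adj_leaf_eq (N : PhyloNetwork X) {x : X} {v : N.V}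
    (h : N.graph.Adj (N.leaf x) v) : v = N.parent x := by
  have : v ∈ N.graph.neighborSet (N.leaf x) := h
  rwa [N.parent_spec x, Set.mem_singleton_iff] at this

end ObsTreeBasics

section ObsImgWalk

variable {X : Type} {T : PhyloTree X} {N : PhyloNetwork X} (I : TreeImage T N)

def obsImgWalk : ∀ {s t : T.V}, T.graph.Walk s t → N.graph.Walk (I.emb s) (I.emb t)
  | _, _, .nil => .nil
  | _, _, .cons h q => (I.walk h).append (obsImgWalk q)

lemma obsImgWalk_edges : ∀ {s t : T.V} (q : T.graph.Walk s t),
    ∀ e ∈ (obsImgWalk I q).edges, e ∈ I.edges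
  | _, _, .nil => by intro e he; simp [obsImgWalk] at he
  | _, _, .cons h q => by
      intro e he
      rw [obsImgWalk, SimpleGraph.Walk.edges_append, List.mem_append] at he
      rcases he with he | he
      · exact ⟨_, _, h, he⟩
      · exact obsImgWalk_edges q e he

lemma obsImgWalk_support : ∀ {s t : T.V} (q : T.graph.Walk s t), ∀ z ∈ (obsImgWalk I q).support,
    z = I.emb s ∨ ∃ (x y : T.V) (hxy : T.graph.Adj x y),
      z ∈ (I.walk hxy).support ∧ s(x, y) ∈ q.edges
  | _, _, .nil => by
      intro z hz
      left
      simpa [obsImgWalk] using hz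
  | s, t, .cons h q => by
      intro z hz
      rw [obsImgWalk, SimpleGraph.Walk.support_append, List.mem_append] at hz
      rcases hz with hz | hz
      · exact Or.inr ⟨_, _, h, hz, by simp⟩
      · rcases obsImgWalk_support q z (List.mem_of_mem_tail hz) with hz' | ⟨x, y, hxy, hzw, he⟩
        · refine Or.inr ⟨_, _, h, ?_, by simp⟩
          rw [hz']
          exact SimpleGraph.Walk.end_mem_support _
        · exact Or.inr ⟨x, y, hxy, hzw, by simp [he]⟩

lemma obsImgWalk_mem_emb : ∀ {s t : T.V} (q : T.graph.Walk s t), ∀ x ∈ q.support,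
    I.emb x ∈ (obsImgWalk I q).support
  | _, _, .nil => by intro x hx; simp at hx; simp [hx, obsImgWalk]
  | _, _, .cons h q => by
      intro x hx
      rw [SimpleGraph.Walk.support_cons, List.mem_cons] at hx
      rw [obsImgWalk, SimpleGraph.Walk.support_append, List.mem_append]
      rcases hx with rfl | hx
      · exact Or.inl (SimpleGraph.Walk.start_mem_support _)
      · have hm := obsImgWalk_mem_emb q x hx
        rw [SimpleGraph.Walk.support_eq_cons, List.mem_cons] at hm
        rcases hm with hm | hm
        · rw [hm]
          exact Or.inl (SimpleGraph.Walk.end_mem_support _)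
        · exact Or.inr hm

lemma obsImgWalk_isPath : ∀ {s t : T.V} (q : T.graph.Walk s t), q.IsPath →
    (obsImgWalk I q).IsPath
  | _, _, .nil => by intro _; simp [obsImgWalk]
  | s, t, .cons h q => by
      rename_i m
      intro hq
      rw [SimpleGraph.Walk.cons_isPath_iff] at hq
      obtain ⟨hq', hs⟩ := hq
      have ih := obsImgWalk_isPath q hq'
      have hmid : I.emb m ∉ (obsImgWalk I q).support.tail := by
        have hnd := ih.support_nodup
        rw [SimpleGraph.Walk.support_eq_cons] at hnd
        exact (List.nodup_cons.mp hnd).1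
      rw [obsImgWalk, SimpleGraph.Walk.isPath_def, SimpleGraph.Walk.support_append,
        List.nodup_append]
      refine ⟨(I.walk_isPath h).support_nodup, ih.support_nodup.tail, ?_⟩
      intro z hz1 z' hz2 hzz
      subst hzz
      have hz2' := List.mem_of_mem_tail hz2
      rcases obsImgWalk_support I q z hz2' with rfl | ⟨x, y, hxy, hzw, he⟩
      · exact hmid hz2
      · have hne : s(s, m) ≠ s(x, y) := by
          intro heq
          rw [Sym2.eq_iff] at heq
          rcases heq with ⟨rfl, rfl⟩ | ⟨rfl, rfl⟩
          · exact hs (SimpleGraph.Walk.fst_mem_support_of_mem_edges q he)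
          · exact hs (SimpleGraph.Walk.snd_mem_support_of_mem_edges q he)
        have h2 := I.internally_disjoint hxy h (Ne.symm hne) z hzw hz1
        rcases h2 with h2 | h2
        · have h1 := I.internally_disjoint h hxy hne z hz1 hzw
          rcases h1 with h1 | h1
          · have hsx : s = x := I.inj (h2.symm.trans h1)
            exact hs (hsx ▸ SimpleGraph.Walk.fst_mem_support_of_mem_edges q he)
          · have hsy : s = y := I.inj (h2.symm.trans h1)
            exact hs (hsy ▸ SimpleGraph.Walk.snd_mem_support_of_mem_edges q he)
        · rw [h2] at hz2
          exact hmid hz2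

lemma obsImgWalk_length_le : ∀ {s t : T.V} (q : T.graph.Walk s t),
    q.length ≤ (obsImgWalk I q).length
  | _, _, .nil => by simp [obsImgWalk]
  | s, t, .cons h q => by
      have h1 := obs_one_le_length (I.walk h) (fun he => h.ne (I.inj he))
      have h2 := obsImgWalk_length_le q
      rw [obsImgWalk, SimpleGraph.Walk.length_append, SimpleGraph.Walk.length_cons]
      omega

lemma obsImgWalk_support_of_length_eq : ∀ {s t : T.V} (q : T.graph.Walk s t),
    (obsImgWalk I q).length = q.length → (obsImgWalk I q).support = q.support.map I.emb
  | _, _, .nil => by intro _; simp [obsImgWalk]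
  | s, t, .cons h q => by
      rename_i m
      intro hlen
      rw [obsImgWalk, SimpleGraph.Walk.length_append, SimpleGraph.Walk.length_cons] at hlen
      have h1 := obs_one_le_length (I.walk h) (fun he => h.ne (I.inj he))
      have h2 := obsImgWalk_length_le I q
      have hwh : (I.walk h).length = 1 := by omega
      have himg : (obsImgWalk I q).length = q.length := by omega
      rw [obsImgWalk, SimpleGraph.Walk.support_append, obs_support_of_length_one _ hwh,
        obsImgWalk_support_of_length_eq q himg, SimpleGraph.Walk.support_cons,
        SimpleGraph.Walk.support_eq_cons q]
      simp
      cases q <;> simp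

end ObsImgWalk
section ObsPins

variable {X : Type} {T : PhyloTree X} {N : PhyloNetwork X}

lemma obs_parent_mem (T : PhyloTree X) {x : X} :
    ∀ {u v : T.V} (q : T.graph.Walk u v), u = T.leaf x → v ≠ u → T.parent x ∈ q.support
  | _, _, .nil, _, hv => absurd rfl hv
  | _, _, .cons h q, hu, _ => by
      subst hu
      rw [SimpleGraph.Walk.support_cons]
      have hmid := T.adj_leaf_eq h
      exact List.mem_cons_of_mem _ (hmid ▸ SimpleGraph.Walk.start_mem_support q)

lemma obs_pins (I : TreeImage T N) (Rs : Set (Sym2 N.V))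
    (hext : I.edges ⊆ Rs) (htree : (SimpleGraph.fromEdgeSet Rs).IsTree)
    (hnl : ∀ s : X, T.parent s ∉ Set.range T.leaf)
    {x y : X} {px py : N.V} (hxy : x ≠ y)
    (hpx : px ∉ Set.range N.leaf) (hpy : py ∉ Set.range N.leaf) (hpxy : px ≠ py)
    (he1 : s(N.leaf x, px) ∈ Rs) (he2 : s(px, py) ∈ Rs) (he3 : s(py, N.leaf y) ∈ Rs) :
    (I.emb (T.parent x) = px ∨ I.emb (T.parent x) = py) ∧
    (I.emb (T.parent y) = px ∨ I.emb (T.parent y) = py) ∧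
    (T.parent x ≠ T.parent y → T.graph.Adj (T.parent x) (T.parent y)) ∧
    ¬ (I.emb (T.parent x) = py ∧ I.emb (T.parent y) = px) := by
  classical
  have hlx_px : N.leaf x ≠ px := fun h => hpx ⟨x, h⟩
  have hlx_py : N.leaf x ≠ py := fun h => hpy ⟨x, h⟩
  have hly_px : N.leaf y ≠ px := fun h => hpx ⟨y, h⟩
  have hly_py : N.leaf y ≠ py := fun h => hpy ⟨y, h⟩
  have hlxy : N.leaf x ≠ N.leaf y := fun h => hxy (N.leaf_inj h)
  have ha1 : (SimpleGraph.fromEdgeSet Rs).Adj (N.leaf x) px :=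
    (SimpleGraph.fromEdgeSet_adj _).mpr ⟨he1, hlx_px⟩
  have ha2 : (SimpleGraph.fromEdgeSet Rs).Adj px py :=
    (SimpleGraph.fromEdgeSet_adj _).mpr ⟨he2, hpxy⟩
  have ha3 : (SimpleGraph.fromEdgeSet Rs).Adj py (N.leaf y) :=
    (SimpleGraph.fromEdgeSet_adj _).mpr ⟨he3, fun h => hpy ⟨y, h.symm⟩⟩
  set P : (SimpleGraph.fromEdgeSet Rs).Walk (N.leaf x) (N.leaf y) :=
    SimpleGraph.Walk.cons ha1 (SimpleGraph.Walk.cons ha2 (SimpleGraph.Walk.cons ha3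
      SimpleGraph.Walk.nil)) with hPdef
  have hPsup : P.support = [N.leaf x, px, py, N.leaf y] := by simp [hPdef]
  have hP : P.IsPath := by
    rw [SimpleGraph.Walk.isPath_def, hPsup]
    simp [hlx_px, hlx_py, hlxy, hpxy, Ne.symm hly_px, Ne.symm hly_py]
  obtain ⟨w0⟩ := T.isTree.isConnected.preconnected (T.leaf x) (T.leaf y)
  set Q := w0.toPath with hQdef
  set iw := obsImgWalk I Q.1 with hiwdef
  have hiw_edges : ∀ e ∈ iw.edges, e ∈ (SimpleGraph.fromEdgeSet Rs).edgeSet := by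
    intro e he
    rw [SimpleGraph.edgeSet_fromEdgeSet]
    exact ⟨hext (obsImgWalk_edges I Q.1 e he),
      SimpleGraph.not_isDiag_of_mem_edgeSet _ (iw.edges_subset_edgeSet he)⟩
  set iw' := (iw.copy (I.leaf_map x) (I.leaf_map y)).transfer (SimpleGraph.fromEdgeSet Rs)
    (by rw [SimpleGraph.Walk.edges_copy]; exact hiw_edges) with hiw'def
  have hiw'path : iw'.IsPath := by
    apply SimpleGraph.Walk.IsPath.transfer
    rw [SimpleGraph.Walk.isPath_copy]
    exact obsImgWalk_isPath I Q.1 Q.2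
  have huniq : (⟨iw', hiw'path⟩ : (SimpleGraph.fromEdgeSet Rs).Path (N.leaf x) (N.leaf y))
      = ⟨P, hP⟩ :=
    SimpleGraph.isAcyclic_iff_path_unique.mp htree.IsAcyclic _ _
  have hsup_eq : iw.support = [N.leaf x, px, py, N.leaf y] := by
    have h1 := congrArg (fun p : (SimpleGraph.fromEdgeSet Rs).Path (N.leaf x) (N.leaf y) =>
      (p : (SimpleGraph.fromEdgeSet Rs).Walk (N.leaf x) (N.leaf y)).support) huniq
    simpa [hiw'def, SimpleGraph.Walk.support_transfer, SimpleGraph.Walk.support_copy,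
      hPsup] using h1
  have hlen_iw : iw.length = 3 := by
    have h2 := congrArg List.length hsup_eq
    rw [SimpleGraph.Walk.length_support] at h2
    simpa using h2
  have hpmx : T.parent x ∈ Q.1.support :=
    obs_parent_mem T Q.1 rfl (fun h => hxy (T.leaf_inj h).symm)
  have hpmy : T.parent y ∈ Q.1.support := by
    have hmem := obs_parent_mem T Q.1.reverse rfl (fun h => hxy (T.leaf_inj h))
    rw [SimpleGraph.Walk.support_reverse] at hmem
    exact List.mem_reverse.mp hmem
  have hmemx : I.emb (T.parent x) ∈ iw.support := obsImgWalk_mem_emb I Q.1 _ hpmx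
  have hmemy : I.emb (T.parent y) ∈ iw.support := obsImgWalk_mem_emb I Q.1 _ hpmy
  have hexcl : ∀ (s z : X), I.emb (T.parent s) = N.leaf z → False := by
    intro s z h
    have h2 : I.emb (T.parent s) = I.emb (T.leaf z) := by rw [h, I.leaf_map]
    exact hnl s ⟨z, (I.inj h2).symm⟩
  rw [hsup_eq] at hmemx hmemy
  simp only [List.mem_cons, List.not_mem_nil, or_false] at hmemx hmemy
  have out1 : I.emb (T.parent x) = px ∨ I.emb (T.parent x) = py := by
    rcases hmemx with h | h | h | h
    · exact absurd h (fun hh => hexcl x x hh)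
    · exact Or.inl h
    · exact Or.inr h
    · exact absurd h (fun hh => hexcl x y hh)
  have out2 : I.emb (T.parent y) = px ∨ I.emb (T.parent y) = py := by
    rcases hmemy with h | h | h | h
    · exact absurd h (fun hh => hexcl y x hh)
    · exact Or.inl h
    · exact Or.inr h
    · exact absurd h (fun hh => hexcl y y hh)
  have key : T.parent x ≠ T.parent y →
      T.graph.Adj (T.parent x) (T.parent y) ∧
      Q.1.support = [T.leaf x, T.parent x, T.parent y, T.leaf y] ∧ Q.1.length = 3 := by
    intro hne
    have hlen_le : Q.1.length ≤ 3 := by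
      have h6 := obsImgWalk_length_le I Q.1
      rw [← hiwdef] at h6
      omega
    have hsup_len : Q.1.support.length ≤ 4 := by
      rw [SimpleGraph.Walk.length_support]; omega
    obtain ⟨l, hQs⟩ : ∃ l, Q.1.support = l := ⟨_, rfl⟩
    have hchain := SimpleGraph.Walk.isChain_adj_support Q.1
    have hhead : Q.1.support = T.leaf x :: Q.1.support.tail := Q.1.support_eq_cons
    have hrev : Q.1.support.reverse = T.leaf y :: Q.1.support.reverse.tail := by
      have h7 := (Q.1.reverse).support_eq_cons
      rwa [SimpleGraph.Walk.support_reverse] at h7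
    have hQx : T.parent x ≠ T.leaf x := fun h => hnl x ⟨x, h.symm⟩
    have hQy : T.parent x ≠ T.leaf y := fun h => hnl x ⟨y, h.symm⟩
    have hQx' : T.parent y ≠ T.leaf x := fun h => hnl y ⟨x, h.symm⟩
    have hQy' : T.parent y ≠ T.leaf y := fun h => hnl y ⟨y, h.symm⟩
    have hlxyT : T.leaf x ≠ T.leaf y := fun h => hxy (T.leaf_inj h)
    rw [hQs] at hchain hpmx hpmy hsup_len hhead hrev
    rcases l with _ | ⟨a0, _ | ⟨a1, _ | ⟨a2, _ | ⟨a3, _ | ⟨a4, rest⟩⟩⟩⟩⟩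
    · simp at hpmx
    · simp only [List.tail_cons] at hhead
      have h0 : a0 = T.leaf x := by simpa using hhead
      have h1 : a0 = T.leaf y := by simpa using hrev
      exact absurd (h0 ▸ h1) hlxyT
    · have h0 : a0 = T.leaf x := by simpa using hhead
      have h1 : a1 = T.leaf y := by simpa using hrev
      subst h0 h1
      simp only [List.mem_cons, List.not_mem_nil, or_false] at hpmx
      rcases hpmx with h | h
      · exact absurd h hQx
      · exact absurd h hQy
    · have h0 : a0 = T.leaf x := by simpa using hhead
      have h2 : a2 = T.leaf y := by simpa using hrev
      subst h0 h2
      simp only [List.mem_cons, List.not_mem_nil, or_false] at hpmx hpmy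
      have hx1 : T.parent x = a1 := by
        rcases hpmx with h | h | h
        · exact absurd h hQx
        · exact h
        · exact absurd h hQy
      have hy1 : T.parent y = a1 := by
        rcases hpmy with h | h | h
        · exact absurd h hQx'
        · exact h
        · exact absurd h hQy'
      exact absurd (hx1.trans hy1.symm) hne
    · have h0 : a0 = T.leaf x := by simpa using hhead
      have h3 : a3 = T.leaf y := by simpa using hrev
      subst h0 h3
      simp only [List.mem_cons, List.not_mem_nil, or_false] at hpmx hpmy
      simp only [List.isChain_cons_cons, List.isChain_singleton, and_true] at hchain
      obtain ⟨hc1, hc2, hc3⟩ := hchain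
      have hx12 : T.parent x = a1 ∨ T.parent x = a2 := by
        rcases hpmx with h | h | h | h
        · exact absurd h hQx
        · exact Or.inl h
        · exact Or.inr h
        · exact absurd h hQy
      have hy12 : T.parent y = a1 ∨ T.parent y = a2 := by
        rcases hpmy with h | h | h | h
        · exact absurd h hQx'
        · exact Or.inl h
        · exact Or.inr h
        · exact absurd h hQy'
      have hlen3 : Q.1.length = 3 := by
        have h4 := Q.1.length_support
        rw [hQs] at h4
        simp at h4
        omega
      rcases hx12 with hx1 | hx2
      · have hy2 : T.parent y = a2 := by
          rcases hy12 with h | h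
          · exact absurd (hx1.trans h.symm) hne
          · exact h
        subst hx1
        refine ⟨by rw [hy2]; exact hc2, ?_, hlen3⟩
        rw [hQs, hy2]
      · have hy1 : T.parent y = a1 := by
          rcases hy12 with h | h
          · exact h
          · exact absurd (hx2.trans h.symm) hne
        have : a1 = T.parent x := T.adj_leaf_eq hc1
        exact absurd (hy1.trans this) (Ne.symm hne)
    · simp at hsup_len
      omega
  refine ⟨out1, out2, fun hne => (key hne).1, ?_⟩
  rintro ⟨hx4, hy4⟩
  have hne : T.parent x ≠ T.parent y := by
    intro h
    rw [h, hy4] at hx4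
    exact hpxy hx4
  obtain ⟨-, hsupQ, hlenQ⟩ := key hne
  have hmap := obsImgWalk_support_of_length_eq I Q.1 (by rw [hlen_iw, hlenQ])
  rw [hsup_eq, hsupQ] at hmap
  simp only [List.map_cons, List.map_nil, I.leaf_map, List.cons.injEq, and_true, true_and] at hmap
  rw [hx4] at hmap
  exact hpxy hmap.1

end ObsPins
section ObsDegree

variable {X : Type} {T : PhyloTree X} {N : PhyloNetwork X}

lemma obs_second {V : Type*} {G : SimpleGraph V} {u v : V} (p : G.Walk u v) (h : u ≠ v) :
    ∃ (z : V) (l : List V), p.support = u :: z :: l := by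
  cases p with
  | nil => exact absurd rfl h
  | cons h' p =>
    refine ⟨p.support.head p.support_ne_nil, p.support.tail, ?_⟩
    rw [SimpleGraph.Walk.support_cons, List.cons_head_tail]

lemma obs_emb_three (I : TreeImage T N) {q : T.V} (hq : q ∉ Set.range T.leaf) :
    ∃ s1 s2 s3 : N.V, s1 ≠ s2 ∧ s1 ≠ s3 ∧ s2 ≠ s3 ∧
      s(I.emb q, s1) ∈ I.edges ∧ s(I.emb q, s2) ∈ I.edges ∧ s(I.emb q, s3) ∈ I.edges := by
  have hfin := T.finV
  obtain ⟨n1, n2, n3, h12, h13, h23, hset⟩ := Set.ncard_eq_three.mp (T.deg_internal q hq)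
  have h1 : T.graph.Adj q n1 := by
    rw [← SimpleGraph.mem_neighborSet, hset]; simp
  have h2 : T.graph.Adj q n2 := by
    rw [← SimpleGraph.mem_neighborSet, hset]; simp
  have h3 : T.graph.Adj q n3 := by
    rw [← SimpleGraph.mem_neighborSet, hset]; simp
  obtain ⟨z1, l1, hz1⟩ := obs_second (I.walk h1) (fun he => h1.ne (I.inj he))
  obtain ⟨z2, l2, hz2⟩ := obs_second (I.walk h2) (fun he => h2.ne (I.inj he))
  obtain ⟨z3, l3, hz3⟩ := obs_second (I.walk h3) (fun he => h3.ne (I.inj he))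
  have hmem1 : z1 ∈ (I.walk h1).support := by rw [hz1]; simp
  have hmem2 : z2 ∈ (I.walk h2).support := by rw [hz2]; simp
  have hmem3 : z3 ∈ (I.walk h3).support := by rw [hz3]; simp
  have hno1 : z1 ≠ I.emb q := by
    have := (I.walk_isPath h1).support_nodup
    rw [hz1, List.nodup_cons] at this
    exact fun h => this.1 (by rw [← h]; simp)
  have hno2 : z2 ≠ I.emb q := by
    have := (I.walk_isPath h2).support_nodup
    rw [hz2, List.nodup_cons] at this
    exact fun h => this.1 (by rw [← h]; simp)
  have hno3 : z3 ≠ I.emb q := by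
    have := (I.walk_isPath h3).support_nodup
    rw [hz3, List.nodup_cons] at this
    exact fun h => this.1 (by rw [← h]; simp)
  have hkey : ∀ (na nb : T.V) (ha : T.graph.Adj q na) (hb : T.graph.Adj q nb), na ≠ nb →
      ∀ z : N.V, z ≠ I.emb q → z ∈ (I.walk ha).support → z ∈ (I.walk hb).support → False := by
    intro na nb ha hb hne z hzq hza hzb
    have hs : s(q, na) ≠ s(q, nb) := by
      intro h
      rcases Sym2.eq_iff.mp h with ⟨-, h'⟩ | ⟨h', -⟩
      · exact hne h'
      · exact hb.ne' (h' ▸ rfl)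
    have d1 := I.internally_disjoint ha hb hs z hza hzb
    have d2 := I.internally_disjoint hb ha (Ne.symm hs) z hzb hza
    rcases d1 with d1 | d1
    · exact hzq d1
    · rcases d2 with d2 | d2
      · exact hzq d2
      · exact hne (I.inj (d2.symm.trans d1).symm).symm
  have hd12 : z1 ≠ z2 := by
    intro h
    exact hkey n1 n2 h1 h2 h12 z1 hno1 hmem1 (h ▸ hmem2)
  have hd13 : z1 ≠ z3 := by
    intro h
    exact hkey n1 n3 h1 h3 h13 z1 hno1 hmem1 (h ▸ hmem3)
  have hd23 : z2 ≠ z3 := by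
    intro h
    exact hkey n2 n3 h2 h3 h23 z2 hno2 hmem2 (h ▸ hmem3)
  exact ⟨z1, z2, z3, hd12, hd13, hd23,
    ⟨q, n1, h1, obs_first_edge _ hz1⟩,
    ⟨q, n2, h2, obs_first_edge _ hz2⟩,
    ⟨q, n3, h3, obs_first_edge _ hz3⟩⟩

end ObsDegree
section ObsSides

variable {X : Type}

structure ObsSF {X : Type} (N : PhyloNetwork X) (S : NSide N) (a b c d : X) : Prop where
  hedges : S.walk.edges = [s(S.u, N.parent a), s(N.parent a, N.parent b),
    s(N.parent b, N.parent c), s(N.parent c, N.parent d), s(N.parent d, S.w)]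
  nb1 : N.graph.neighborSet (N.parent a) = {S.u, N.parent b, N.leaf a}
  nb2 : N.graph.neighborSet (N.parent b) = {N.parent a, N.parent c, N.leaf b}
  nb3 : N.graph.neighborSet (N.parent c) = {N.parent b, N.parent d, N.leaf c}
  nb4 : N.graph.neighborSet (N.parent d) = {N.parent c, S.w, N.leaf d}
  gu : genVertex N S.u
  gw : genVertex N S.w
  np1 : N.parent a ∉ Set.range N.leaf
  np2 : N.parent b ∉ Set.range N.leaf
  np3 : N.parent c ∉ Set.range N.leaf
  np4 : N.parent d ∉ Set.range N.leaf
  hab : N.parent a ≠ N.parent b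
  hac : N.parent a ≠ N.parent c
  had : N.parent a ≠ N.parent d
  haw : N.parent a ≠ S.w
  hbc : N.parent b ≠ N.parent c
  hbd : N.parent b ≠ N.parent d
  hbw : N.parent b ≠ S.w
  hcd : N.parent c ≠ N.parent d
  hcw : N.parent c ≠ S.w
  hdw : N.parent d ≠ S.w
  hua : S.u ≠ N.parent a
  hub : S.u ≠ N.parent b
  huc : S.u ≠ N.parent c
  hud : S.u ≠ N.parent d

variable {N : PhyloNetwork X}

lemma obs_gen_ne_parent {g : N.V} (hg : genVertex N g) (y : X) : g ≠ N.parent y :=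
  fun h => hg.2 y (h ▸ (N.adj_parent y).symm)

lemma obs_not_leaf_ne {v : N.V} (hv : v ∉ Set.range N.leaf) (y : X) : v ≠ N.leaf y :=
  fun h => hv ⟨y, h.symm⟩

lemma obs_mkSF (N : PhyloNetwork X) (S : NSide N) (a b c d : X)
    (hsup : S.walk.support =
      [S.u, N.parent a, N.parent b, N.parent c, N.parent d, S.w]) : ObsSF N S a b c d := by
  have hfin := N.finV
  have hnd : List.Nodup [N.parent a, N.parent b, N.parent c, N.parent d, S.w] := by
    have h := S.nodup
    rw [hsup] at h
    exact h
  simp only [List.nodup_cons, List.mem_cons, List.not_mem_nil, or_false,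
    List.nodup_nil, and_true, not_or] at hnd
  obtain ⟨⟨hab, hac, had, haw⟩, ⟨hbc, hbd, hbw⟩, ⟨hcd, hcw⟩, hdw, -⟩ := hnd
  have hu : S.u ≠ N.parent a ∧ S.u ≠ N.parent b ∧ S.u ≠ N.parent c ∧ S.u ≠ N.parent d := by
    rcases S.no_return with h | h
    · rw [h]
      exact ⟨fun hh => haw hh.symm, fun hh => hbw hh.symm, fun hh => hcw hh.symm,
        fun hh => hdw hh.symm⟩
    · rw [hsup] at h
      simp only [List.tail_cons, List.mem_cons, List.not_mem_nil, or_false, not_or] at h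
      exact ⟨h.1, h.2.1, h.2.2.1, h.2.2.2.1⟩
  obtain ⟨hua, hub, huc, hud⟩ := hu
  have hch := SimpleGraph.Walk.isChain_adj_support S.walk
  rw [hsup] at hch
  simp only [List.isChain_cons_cons, List.isChain_singleton, and_true] at hch
  obtain ⟨hc0, hc1, hc2, hc3, hc4⟩ := hch
  have hintern : ∀ v ∈ [N.parent a, N.parent b, N.parent c, N.parent d],
      ¬ genVertex N v ∧ v ∉ Set.range N.leaf := by
    intro v hv
    refine S.internal v ?_ ?_ ?_
    · rw [hsup]
      simp only [List.mem_cons] at hv ⊢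
      tauto
    · simp only [List.mem_cons, List.not_mem_nil, or_false] at hv
      rcases hv with rfl | rfl | rfl | rfl
      · exact fun h => hua h.symm
      · exact fun h => hub h.symm
      · exact fun h => huc h.symm
      · exact fun h => hud h.symm
    · simp only [List.mem_cons, List.not_mem_nil, or_false] at hv
      rcases hv with rfl | rfl | rfl | rfl
      · exact haw
      · exact hbw
      · exact hcw
      · exact hdw
  have np1 : N.parent a ∉ Set.range N.leaf := (hintern _ (by simp)).2
  have np2 : N.parent b ∉ Set.range N.leaf := (hintern _ (by simp)).2
  have np3 : N.parent c ∉ Set.range N.leaf := (hintern _ (by simp)).2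
  have np4 : N.parent d ∉ Set.range N.leaf := (hintern _ (by simp)).2
  have gu := S.gu
  have gw := S.gw
  refine ⟨obs_edges_of_support6 S.walk hsup, ?_, ?_, ?_, ?_,
    gu, gw, np1, np2, np3, np4, hab, hac, had, haw, hbc, hbd, hbw, hcd, hcw, hdw,
    hua, hub, huc, hud⟩
  · exact obs_nbhd_three (N.deg_internal _ np1) hub (fun h => gu.1 ⟨a, h.symm⟩)
      (obs_not_leaf_ne np2 a) hc0.symm hc1 (N.adj_parent a).symm
  · exact obs_nbhd_three (N.deg_internal _ np2) hac (obs_not_leaf_ne np1 b)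
      (obs_not_leaf_ne np3 b) hc1.symm hc2 (N.adj_parent b).symm
  · exact obs_nbhd_three (N.deg_internal _ np3) hbd (obs_not_leaf_ne np2 c)
      (obs_not_leaf_ne np4 c) hc2.symm hc3 (N.adj_parent c).symm
  · exact obs_nbhd_three (N.deg_internal _ np4) hcw (obs_not_leaf_ne np3 d)
      (fun h => gw.1 ⟨d, h.symm⟩) hc3.symm hc4 (N.adj_parent d).symm

variable {S S' : NSide N} {a b c d a' b' c' d' : X}

lemma obs_eset_aligned (F : ObsSF N S a b c d) (F' : ObsSF N S' a' b' c' d')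
    (h0 : S.u = S'.u) (h1 : N.parent a = N.parent a') (h2 : N.parent b = N.parent b')
    (h3 : N.parent c = N.parent c') (h4 : N.parent d = N.parent d') (h5 : S.w = S'.w) :
    S.edgeSet = S'.edgeSet := by
  ext e
  show e ∈ S.walk.edges ↔ e ∈ S'.walk.edges
  rw [F.hedges, F'.hedges, h0, h1, h2, h3, h4, h5]

lemma obs_eset_reversed (F : ObsSF N S a b c d) (F' : ObsSF N S' a' b' c' d')
    (h0 : S.u = S'.w) (h1 : N.parent a = N.parent d') (h2 : N.parent b = N.parent c')
    (h3 : N.parent c = N.parent b') (h4 : N.parent d = N.parent a') (h5 : S.w = S'.u) :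
    S.edgeSet = S'.edgeSet := by
  ext e
  show e ∈ S.walk.edges ↔ e ∈ S'.walk.edges
  rw [F.hedges, F'.hedges, h0, h1, h2, h3, h4, h5]
  simp only [List.mem_cons, List.not_mem_nil, or_false]
  constructor
  · rintro (rfl | rfl | rfl | rfl | rfl)
    · exact Or.inr (Or.inr (Or.inr (Or.inr Sym2.eq_swap)))
    · exact Or.inr (Or.inr (Or.inr (Or.inl Sym2.eq_swap)))
    · exact Or.inr (Or.inr (Or.inl Sym2.eq_swap))
    · exact Or.inr (Or.inl Sym2.eq_swap)
    · exact Or.inl Sym2.eq_swap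
  · rintro (rfl | rfl | rfl | rfl | rfl)
    · exact Or.inr (Or.inr (Or.inr (Or.inr Sym2.eq_swap)))
    · exact Or.inr (Or.inr (Or.inr (Or.inl Sym2.eq_swap)))
    · exact Or.inr (Or.inr (Or.inl Sym2.eq_swap))
    · exact Or.inr (Or.inl Sym2.eq_swap)
    · exact Or.inl Sym2.eq_swap

lemma obs_notP_leaf (y : X) : ¬ (N.leaf y ∉ Set.range N.leaf) := fun h => h ⟨y, rfl⟩

end ObsSides
section ObsShares

variable {X : Type} {N : PhyloNetwork X} {S S' : NSide N} {a b c d a' b' c' d' : X}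

private abbrev obsP (N : PhyloNetwork X) : N.V → Prop := fun v => v ∉ Set.range N.leaf

lemma obs_share22 (F : ObsSF N S a b c d) (F' : ObsSF N S' a' b' c' d') (h : N.parent b = N.parent b') :
    S.edgeSet = S'.edgeSet := by
  have heq2 : ({N.parent a, N.parent c, N.leaf b} : Set N.V)
      = {N.parent a', N.parent c', N.leaf b'} := by
    rw [← F.nb2, ← F'.nb2, h]
  rcases obs_triple_match (obsP N) heq2 F.hac F'.hac F.np1 F.np3 F'.np1 F'.np3
      (obs_notP_leaf _) (obs_notP_leaf _) with ⟨hA1, hA3⟩ | ⟨hB1, hB3⟩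
  · have heq1 : ({S.u, N.parent b, N.leaf a} : Set N.V)
        = {S'.u, N.parent b', N.leaf a'} := by
      rw [← F.nb1, ← F'.nb1, hA1]
    have hu : S.u = S'.u := by
      rcases obs_triple_match (obsP N) heq1 F.hub F'.hub F.gu.1 F.np2 F'.gu.1 F'.np2
          (obs_notP_leaf _) (obs_notP_leaf _) with ⟨hu, -⟩ | ⟨hu, -⟩
      · exact hu
      · exact absurd hu (obs_gen_ne_parent F.gu b')
    have heq3 : ({N.parent b, N.parent d, N.leaf c} : Set N.V)
        = {N.parent b', N.parent d', N.leaf c'} := by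
      rw [← F.nb3, ← F'.nb3, hA3]
    have hd : N.parent d = N.parent d' := by
      rcases obs_triple_match (obsP N) heq3 F.hbd F'.hbd F.np2 F.np4 F'.np2 F'.np4
          (obs_notP_leaf _) (obs_notP_leaf _) with ⟨-, hd⟩ | ⟨hbd', -⟩
      · exact hd
      · exact absurd (hbd'.symm.trans h).symm F'.hbd
    have heq4 : ({N.parent c, S.w, N.leaf d} : Set N.V)
        = {N.parent c', S'.w, N.leaf d'} := by
      rw [← F.nb4, ← F'.nb4, hd]
    have hw : S.w = S'.w := by
      rcases obs_triple_match (obsP N) heq4 F.hcw F'.hcw F.np3 F.gw.1 F'.np3 F'.gw.1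
          (obs_notP_leaf _) (obs_notP_leaf _) with ⟨-, hw⟩ | ⟨hcw', -⟩
      · exact hw
      · exact absurd hcw'.symm (obs_gen_ne_parent F'.gw c)
    exact obs_eset_aligned F F' hu hA1 h hA3 hd hw
  · have heq1 : ({S.u, N.parent b, N.leaf a} : Set N.V)
        = {N.parent b', N.parent d', N.leaf c'} := by
      rw [← F.nb1, ← F'.nb3, hB1]
    rcases obs_triple_match (obsP N) heq1 F.hub F'.hbd F.gu.1 F.np2 F'.np2 F'.np4
        (obs_notP_leaf _) (obs_notP_leaf _) with ⟨hu, -⟩ | ⟨hu, -⟩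
    · exact absurd hu (obs_gen_ne_parent F.gu b')
    · exact absurd hu (obs_gen_ne_parent F.gu d')

lemma obs_share33 (F : ObsSF N S a b c d) (F' : ObsSF N S' a' b' c' d') (h : N.parent c = N.parent c') :
    S.edgeSet = S'.edgeSet := by
  have heq3 : ({N.parent b, N.parent d, N.leaf c} : Set N.V)
      = {N.parent b', N.parent d', N.leaf c'} := by
    rw [← F.nb3, ← F'.nb3, h]
  rcases obs_triple_match (obsP N) heq3 F.hbd F'.hbd F.np2 F.np4 F'.np2 F'.np4
      (obs_notP_leaf _) (obs_notP_leaf _) with ⟨hb, hd⟩ | ⟨hbd', -⟩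
  · have heq2 : ({N.parent a, N.parent c, N.leaf b} : Set N.V)
        = {N.parent a', N.parent c', N.leaf b'} := by
      rw [← F.nb2, ← F'.nb2, hb]
    have ha : N.parent a = N.parent a' := by
      rcases obs_triple_match (obsP N) heq2 F.hac F'.hac F.np1 F.np3 F'.np1 F'.np3
          (obs_notP_leaf _) (obs_notP_leaf _) with ⟨ha, -⟩ | ⟨-, hca'⟩
      · exact ha
      · exact absurd (hca'.symm.trans h) F'.hac
    have heq1 : ({S.u, N.parent b, N.leaf a} : Set N.V)
        = {S'.u, N.parent b', N.leaf a'} := by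
      rw [← F.nb1, ← F'.nb1, ha]
    have hu : S.u = S'.u := by
      rcases obs_triple_match (obsP N) heq1 F.hub F'.hub F.gu.1 F.np2 F'.gu.1 F'.np2
          (obs_notP_leaf _) (obs_notP_leaf _) with ⟨hu, -⟩ | ⟨hu, -⟩
      · exact hu
      · exact absurd hu (obs_gen_ne_parent F.gu b')
    have heq4 : ({N.parent c, S.w, N.leaf d} : Set N.V)
        = {N.parent c', S'.w, N.leaf d'} := by
      rw [← F.nb4, ← F'.nb4, hd]
    have hw : S.w = S'.w := by
      rcases obs_triple_match (obsP N) heq4 F.hcw F'.hcw F.np3 F.gw.1 F'.np3 F'.gw.1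
          (obs_notP_leaf _) (obs_notP_leaf _) with ⟨-, hw⟩ | ⟨hcw', -⟩
      · exact hw
      · exact absurd hcw'.symm (obs_gen_ne_parent F'.gw c)
    exact obs_eset_aligned F F' hu ha hb h hd hw
  · have heqX : ({N.parent a, N.parent c, N.leaf b} : Set N.V)
        = {N.parent c', S'.w, N.leaf d'} := by
      rw [← F.nb2, ← F'.nb4, hbd']
    rcases obs_triple_match (obsP N) heqX F.hac F'.hcw F.np1 F.np3 F'.np3 F'.gw.1
        (obs_notP_leaf _) (obs_notP_leaf _) with ⟨-, hcw'⟩ | ⟨haw', -⟩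
    · exact absurd hcw'.symm (obs_gen_ne_parent F'.gw c)
    · exact absurd haw'.symm (obs_gen_ne_parent F'.gw a)

lemma obs_share44 (F : ObsSF N S a b c d) (F' : ObsSF N S' a' b' c' d') (h : N.parent d = N.parent d') :
    S.edgeSet = S'.edgeSet := by
  have heq4 : ({N.parent c, S.w, N.leaf d} : Set N.V)
      = {N.parent c', S'.w, N.leaf d'} := by
    rw [← F.nb4, ← F'.nb4, h]
  rcases obs_triple_match (obsP N) heq4 F.hcw F'.hcw F.np3 F.gw.1 F'.np3 F'.gw.1
      (obs_notP_leaf _) (obs_notP_leaf _) with ⟨hc, hw⟩ | ⟨hcW, -⟩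
  · have heq3 : ({N.parent b, N.parent d, N.leaf c} : Set N.V)
        = {N.parent b', N.parent d', N.leaf c'} := by
      rw [← F.nb3, ← F'.nb3, hc]
    have hb : N.parent b = N.parent b' := by
      rcases obs_triple_match (obsP N) heq3 F.hbd F'.hbd F.np2 F.np4 F'.np2 F'.np4
          (obs_notP_leaf _) (obs_notP_leaf _) with ⟨hb, -⟩ | ⟨-, hdb'⟩
      · exact hb
      · exact absurd (hdb'.symm.trans h) F'.hbd
    have heq2 : ({N.parent a, N.parent c, N.leaf b} : Set N.V)
        = {N.parent a', N.parent c', N.leaf b'} := by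
      rw [← F.nb2, ← F'.nb2, hb]
    have ha : N.parent a = N.parent a' := by
      rcases obs_triple_match (obsP N) heq2 F.hac F'.hac F.np1 F.np3 F'.np1 F'.np3
          (obs_notP_leaf _) (obs_notP_leaf _) with ⟨ha, -⟩ | ⟨-, hca'⟩
      · exact ha
      · exact absurd (hca'.symm.trans hc) F'.hac
    have heq1 : ({S.u, N.parent b, N.leaf a} : Set N.V)
        = {S'.u, N.parent b', N.leaf a'} := by
      rw [← F.nb1, ← F'.nb1, ha]
    have hu : S.u = S'.u := by
      rcases obs_triple_match (obsP N) heq1 F.hub F'.hub F.gu.1 F.np2 F'.gu.1 F'.np2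
          (obs_notP_leaf _) (obs_notP_leaf _) with ⟨hu, -⟩ | ⟨hu, -⟩
      · exact hu
      · exact absurd hu (obs_gen_ne_parent F.gu b')
    exact obs_eset_aligned F F' hu ha hb hc h hw
  · exact absurd hcW.symm (obs_gen_ne_parent F'.gw c)

lemma obs_share23 (F : ObsSF N S a b c d) (F' : ObsSF N S' a' b' c' d') (h : N.parent b = N.parent c') :
    S.edgeSet = S'.edgeSet := by
  have heq : ({N.parent a, N.parent c, N.leaf b} : Set N.V)
      = {N.parent b', N.parent d', N.leaf c'} := by
    rw [← F.nb2, ← F'.nb3, h]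
  rcases obs_triple_match (obsP N) heq F.hac F'.hbd F.np1 F.np3 F'.np2 F'.np4
      (obs_notP_leaf _) (obs_notP_leaf _) with ⟨-, hA2⟩ | ⟨hB1, hB2⟩
  · have heqX : ({N.parent b, N.parent d, N.leaf c} : Set N.V)
        = {N.parent c', S'.w, N.leaf d'} := by
      rw [← F.nb3, ← F'.nb4, hA2]
    rcases obs_triple_match (obsP N) heqX F.hbd F'.hcw F.np2 F.np4 F'.np3 F'.gw.1
        (obs_notP_leaf _) (obs_notP_leaf _) with ⟨-, hdw'⟩ | ⟨hbw', -⟩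
    · exact absurd hdw'.symm (obs_gen_ne_parent F'.gw d)
    · exact absurd hbw'.symm (obs_gen_ne_parent F'.gw b)
  · have heqY : ({S.u, N.parent b, N.leaf a} : Set N.V)
        = {N.parent c', S'.w, N.leaf d'} := by
      rw [← F.nb1, ← F'.nb4, hB1]
    rcases obs_triple_match (obsP N) heqY F.hub F'.hcw F.gu.1 F.np2 F'.np3 F'.gw.1
        (obs_notP_leaf _) (obs_notP_leaf _) with ⟨huc', -⟩ | ⟨huw', -⟩
    · exact absurd huc' (obs_gen_ne_parent F.gu c')
    · have heqZ : ({N.parent b, N.parent d, N.leaf c} : Set N.V)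
          = {N.parent a', N.parent c', N.leaf b'} := by
        rw [← F.nb3, ← F'.nb2, hB2]
      rcases obs_triple_match (obsP N) heqZ F.hbd F'.hac F.np2 F.np4 F'.np1 F'.np3
          (obs_notP_leaf _) (obs_notP_leaf _) with ⟨hba', -⟩ | ⟨-, hda'⟩
      · exact absurd (hba'.symm.trans h) F'.hac
      · have heqW : ({N.parent c, S.w, N.leaf d} : Set N.V)
            = {S'.u, N.parent b', N.leaf a'} := by
          rw [← F.nb4, ← F'.nb1, hda']
        rcases obs_triple_match (obsP N) heqW F.hcw F'.hub F.np3 F.gw.1 F'.gu.1 F'.np2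
            (obs_notP_leaf _) (obs_notP_leaf _) with ⟨hcu', -⟩ | ⟨-, hwu'⟩
        · exact absurd hcu'.symm (obs_gen_ne_parent F'.gu c)
        · exact obs_eset_reversed F F' huw' hB1 h hB2 hda' hwu'

lemma obs_share24 (F : ObsSF N S a b c d) (F' : ObsSF N S' a' b' c' d') (h : N.parent b = N.parent d') : False := by
  have heq : ({N.parent a, N.parent c, N.leaf b} : Set N.V)
      = {N.parent c', S'.w, N.leaf d'} := by
    rw [← F.nb2, ← F'.nb4, h]
  rcases obs_triple_match (obsP N) heq F.hac F'.hcw F.np1 F.np3 F'.np3 F'.gw.1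
      (obs_notP_leaf _) (obs_notP_leaf _) with ⟨-, hcw'⟩ | ⟨haw', -⟩
  · exact absurd hcw'.symm (obs_gen_ne_parent F'.gw c)
  · exact absurd haw'.symm (obs_gen_ne_parent F'.gw a)

lemma obs_share34 (F : ObsSF N S a b c d) (F' : ObsSF N S' a' b' c' d') (h : N.parent c = N.parent d') : False := by
  have heq : ({N.parent b, N.parent d, N.leaf c} : Set N.V)
      = {N.parent c', S'.w, N.leaf d'} := by
    rw [← F.nb3, ← F'.nb4, h]
  rcases obs_triple_match (obsP N) heq F.hbd F'.hcw F.np2 F.np4 F'.np3 F'.gw.1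
      (obs_notP_leaf _) (obs_notP_leaf _) with ⟨-, hdw'⟩ | ⟨hbw', -⟩
  · exact absurd hdw'.symm (obs_gen_ne_parent F'.gw d)
  · exact absurd hbw'.symm (obs_gen_ne_parent F'.gw b)

end ObsShares
section ObsChains

variable {X : Type}

lemma obs_isChain3 (T : PhyloTree X) {x y z : X} (hxy : x ≠ y) (hxz : x ≠ z) (hyz : y ≠ z)
    (h1 : T.parent x = T.parent y ∨ T.graph.Adj (T.parent x) (T.parent y))
    (h2 : T.parent y = T.parent z ∨ T.graph.Adj (T.parent y) (T.parent z)) :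
    T.isChain [x, y, z] := by
  refine ⟨by simp, by simp [hxy, hxz, hyz], ?_, ?_⟩
  · intro i p q hp hq
    match i with
    | 0 =>
      simp only [List.getElem?_cons_zero, List.getElem?_cons_succ] at hp hq
      obtain rfl := Option.some.inj hp
      obtain rfl := Option.some.inj hq
      exact h1
    | 1 =>
      simp only [List.getElem?_cons_zero, List.getElem?_cons_succ] at hp hq
      obtain rfl := Option.some.inj hp
      obtain rfl := Option.some.inj hq
      exact h2
    | (n + 2) => simp at hq
  · intro i j p q hi hij hj hp hq
    simp only [List.length_cons, List.length_nil] at hj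
    omega

lemma obs_isChain4 (T : PhyloTree X) {x y z t : X} (hxy : x ≠ y) (hxz : x ≠ z) (hxt : x ≠ t)
    (hyz : y ≠ z) (hyt : y ≠ t) (hzt : z ≠ t)
    (h1 : T.parent x = T.parent y ∨ T.graph.Adj (T.parent x) (T.parent y))
    (h2 : T.parent y = T.parent z ∨ T.graph.Adj (T.parent y) (T.parent z))
    (h3 : T.parent z = T.parent t ∨ T.graph.Adj (T.parent z) (T.parent t))
    (hmid : T.parent y ≠ T.parent z) :
    T.isChain [x, y, z, t] := by
  refine ⟨by simp, by simp [hxy, hxz, hxt, hyz, hyt, hzt], ?_, ?_⟩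
  · intro i p q hp hq
    match i with
    | 0 =>
      simp only [List.getElem?_cons_zero, List.getElem?_cons_succ] at hp hq
      obtain rfl := Option.some.inj hp
      obtain rfl := Option.some.inj hq
      exact h1
    | 1 =>
      simp only [List.getElem?_cons_zero, List.getElem?_cons_succ] at hp hq
      obtain rfl := Option.some.inj hp
      obtain rfl := Option.some.inj hq
      exact h2
    | 2 =>
      simp only [List.getElem?_cons_zero, List.getElem?_cons_succ] at hp hq
      obtain rfl := Option.some.inj hp
      obtain rfl := Option.some.inj hq
      exact h3
    | (n + 3) => simp at hq
  · intro i j p q hi hij hj hp hq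
    simp only [List.length_cons, List.length_nil] at hj
    have hi1 : i = 1 := by omega
    have hj2 : j = 2 := by omega
    subst hi1 hj2
    simp only [List.getElem?_cons_zero, List.getElem?_cons_succ] at hp hq
    obtain rfl := Option.some.inj hp
    obtain rfl := Option.some.inj hq
    exact hmid

lemma obs_not_isChain4 (T : PhyloTree X) {x y z t : X} (h : T.parent y = T.parent z) :
    ¬ T.isChain [x, y, z, t] := by
  rintro ⟨-, -, -, h4⟩
  exact h4 1 2 y z (le_refl 1) (by omega) (by simp) rfl rfl h

lemma obs_not_pendant3 (T : PhyloTree X) {x y z : X} (h1 : T.parent x ≠ T.parent y)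
    (h2 : T.parent y ≠ T.parent z) : ¬ T.pendantChain [x, y, z] := by
  rintro ⟨-, hf | hf⟩
  · obtain ⟨p, q, hp, hq, heq⟩ := hf
    simp only [List.getElem?_cons_zero, List.getElem?_cons_succ] at hp hq
    obtain rfl := Option.some.inj hp
    obtain rfl := Option.some.inj hq
    exact h1 heq
  · obtain ⟨p, q, hp, hq, heq⟩ := hf
    simp only [List.reverse_cons, List.reverse_nil, List.nil_append, List.cons_append,
      List.getElem?_cons_zero, List.getElem?_cons_succ] at hp hq
    obtain rfl := Option.some.inj hp
    obtain rfl := Option.some.inj hq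
    exact h2 heq.symm

lemma obs_leaf_edge {N : PhyloNetwork X} {T : PhyloTree X} (E : SpanExt T N) (x : X) :
    s(N.leaf x, N.parent x) ∈ E.R := by
  have hne : N.leaf x ≠ N.parent x := (N.adj_parent x).ne
  obtain ⟨p⟩ := E.isTree.isConnected.preconnected (N.leaf x) (N.parent x)
  obtain ⟨z, hz⟩ := obs_adj_of_walk p hne
  rw [SimpleGraph.fromEdgeSet_adj] at hz
  have hadj : N.graph.Adj (N.leaf x) z := (N.graph.mem_edgeSet).mp (E.sub hz.1)
  have := N.adj_leaf_eq hadj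
  subst this
  exact hz.1

end ObsChains
section ObsCore

lemma obs_core {X : Type} (A B : PhyloTree X) (N : PhyloNetwork X)
    (EA : SpanExt A N) (EB : SpanExt B N) (S : NSide N) (a b c d : X)
    (hsup : S.walk.support = [S.u, N.parent a, N.parent b, N.parent c, N.parent d, S.w])
    (hom : omitsOnly EA.R S s(N.parent a, N.parent b))
    (hcov : coversSide EB.R S)
    (hno3 : ¬ Red3App A B) :
    A.cherry b c ∧ A.isChain [b, c, d] ∧ B.isChain [b, c, d] ∧
    ¬ B.pendantChain [b, c, d] ∧ B.isChain [a, b, c, d] ∧ ¬ A.isChain [a, b, c, d] := by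
  have F := obs_mkSF N S a b c d hsup
  have hab' : a ≠ b := fun h => F.hab (by rw [h])
  have hac' : a ≠ c := fun h => F.hac (by rw [h])
  have had' : a ≠ d := fun h => F.had (by rw [h])
  have hbc' : b ≠ c := fun h => F.hbc (by rw [h])
  have hbd' : b ≠ d := fun h => F.hbd (by rw [h])
  have hcd' : c ≠ d := fun h => F.hcd (by rw [h])
  have hnlA := A.parent_not_leaf hbc' hbd' hcd'
  have hnlB := B.parent_not_leaf hbc' hbd' hcd'
  -- edges of the side present in the two spanning trees
  have hmbc : s(N.parent b, N.parent c) ∈ S.walk.edges := by rw [F.hedges]; simp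
  have hmcd : s(N.parent c, N.parent d) ∈ S.walk.edges := by rw [F.hedges]; simp
  have hmab : s(N.parent a, N.parent b) ∈ S.walk.edges := by rw [F.hedges]; simp
  have hne_bc : s(N.parent b, N.parent c) ≠ s(N.parent a, N.parent b) := by
    intro hq
    rcases Sym2.eq_iff.mp hq with ⟨h1, -⟩ | ⟨-, h2⟩
    · exact F.hab h1.symm
    · exact F.hac h2.symm
  have hne_cd : s(N.parent c, N.parent d) ≠ s(N.parent a, N.parent b) := by
    intro hq
    rcases Sym2.eq_iff.mp hq with ⟨h1, -⟩ | ⟨-, h2⟩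
    · exact F.hac h1.symm
    · exact F.had h2.symm
  have heA_bc : s(N.parent b, N.parent c) ∈ EA.R := hom.2 _ hmbc hne_bc
  have heA_cd : s(N.parent c, N.parent d) ∈ EA.R := hom.2 _ hmcd hne_cd
  have heB_ab : s(N.parent a, N.parent b) ∈ EB.R := hcov _ hmab
  have heB_bc : s(N.parent b, N.parent c) ∈ EB.R := hcov _ hmbc
  have heB_cd : s(N.parent c, N.parent d) ∈ EB.R := hcov _ hmcd
  have hswap : ∀ (E : SpanExt A N) (x : X), s(N.parent x, N.leaf x) ∈ E.R := by
    intro E x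
    rw [Sym2.eq_swap]
    exact obs_leaf_edge E x
  have hswapB : ∀ (E : SpanExt B N) (x : X), s(N.parent x, N.leaf x) ∈ E.R := by
    intro E x
    rw [Sym2.eq_swap]
    exact obs_leaf_edge E x
  -- A-side pins
  have pinsA_bc := obs_pins EA.img EA.R EA.extends_img EA.isTree hnlA hbc' F.np2 F.np3 F.hbc
    (obs_leaf_edge EA b) heA_bc (hswap EA c)
  have pinsA_cd := obs_pins EA.img EA.R EA.extends_img EA.isTree hnlA hcd' F.np3 F.np4 F.hcd
    (obs_leaf_edge EA c) heA_cd (hswap EA d)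
  have hnotpb : EA.img.emb (A.parent b) ≠ N.parent b := by
    intro hEq
    obtain ⟨s1, s2, s3, d12, d13, d23, e1, e2, e3⟩ := obs_emb_three EA.img (hnlA b)
    rw [hEq] at e1 e2 e3
    have key : ∀ z : N.V, s(N.parent b, z) ∈ EA.img.edges → z = N.parent c ∨ z = N.leaf b := by
      intro z he
      have hR : s(N.parent b, z) ∈ EA.R := EA.extends_img he
      have hadj : N.graph.Adj (N.parent b) z := (N.graph.mem_edgeSet).mp (EA.sub hR)
      have hz : z ∈ N.graph.neighborSet (N.parent b) := hadj
      rw [F.nb2] at hz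
      rcases hz with rfl | rfl | rfl
      · exfalso
        apply hom.1
        rw [Sym2.eq_swap] at hR
        exact hR
      · exact Or.inl rfl
      · exact Or.inr rfl
    have k1 := key s1 e1
    have k2 := key s2 e2
    have k3 := key s3 e3
    rcases k1 with rfl | rfl <;> rcases k2 with h | h <;> rcases k3 with h' | h' <;> simp_all
  have hpinb : EA.img.emb (A.parent b) = N.parent c := by
    rcases pinsA_bc.1 with h | h
    · exact absurd h hnotpb
    · exact h
  have hpinc : EA.img.emb (A.parent c) = N.parent c := by
    rcases pinsA_bc.2.1 with h | h
    · exact absurd ⟨hpinb, h⟩ pinsA_bc.2.2.2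
    · exact h
  have hparbcA : A.parent b = A.parent c := EA.img.inj (hpinb.trans hpinc.symm)
  have cherryA : A.cherry b c := ⟨hbc', hparbcA⟩
  have hAdjA_cd : A.graph.Adj (A.parent c) (A.parent d) := by
    rcases pinsA_cd.2.1 with h | h
    · -- emb (A.parent d) = N.parent c : degenerate star, contradiction via taxon a
      exfalso
      have hparcd : A.parent d = A.parent c := EA.img.inj (h.trans hpinc.symm)
      have hfinA := A.finV
      have hAb : A.graph.Adj (A.parent c) (A.leaf b) := by
        rw [← hparbcA]; exact (A.adj_parent b).symm
      have hAc : A.graph.Adj (A.parent c) (A.leaf c) := (A.adj_parent c).symm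
      have hAd : A.graph.Adj (A.parent c) (A.leaf d) := by
        rw [← hparcd]; exact (A.adj_parent d).symm
      have hnb : A.graph.neighborSet (A.parent c) = {A.leaf b, A.leaf c, A.leaf d} :=
        obs_nbhd_three (A.deg_internal _ (hnlA c)) (fun h2 => hbc' (A.leaf_inj h2))
          (fun h2 => hbd' (A.leaf_inj h2)) (fun h2 => hcd' (A.leaf_inj h2)) hAb hAc hAd
      have hcl : ∀ ⦃v w2 : A.V⦄, A.graph.Adj v w2 →
          v ∈ ({A.parent c, A.leaf b, A.leaf c, A.leaf d} : Set A.V) →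
          w2 ∈ ({A.parent c, A.leaf b, A.leaf c, A.leaf d} : Set A.V) := by
        intro v w2 hvw hv
        rcases hv with rfl | rfl | rfl | rfl
        · have hw : w2 ∈ A.graph.neighborSet (A.parent c) := hvw
          rw [hnb] at hw
          exact Set.mem_insert_iff.mpr (Or.inr hw)
        · exact Set.mem_insert_iff.mpr
            (Or.inl ((A.adj_leaf_eq hvw).trans hparbcA))
        · exact Set.mem_insert_iff.mpr (Or.inl (A.adj_leaf_eq hvw))
        · exact Set.mem_insert_iff.mpr
            (Or.inl ((A.adj_leaf_eq hvw).trans hparcd))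
      obtain ⟨p⟩ := A.isTree.isConnected.preconnected (A.parent c) (A.leaf a)
      have hmem := obs_closure _ hcl p (Set.mem_insert _ _)
      rcases hmem with h2 | h2 | h2 | h2
      · exact hnlA c ⟨a, h2⟩
      · exact hab' (A.leaf_inj h2)
      · exact hac' (A.leaf_inj h2)
      · exact had' (A.leaf_inj h2)
    · exact pinsA_cd.2.2.1 (fun hq => F.hcd (hpinc.symm.trans (hq ▸ h)))
  have chainA3 : A.isChain [b, c, d] :=
    obs_isChain3 A hbc' hbd' hcd' (Or.inl hparbcA) (Or.inr hAdjA_cd)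
  -- B-side pins
  have pinsB_ab := obs_pins EB.img EB.R EB.extends_img EB.isTree hnlB hab' F.np1 F.np2 F.hab
    (obs_leaf_edge EB a) heB_ab (hswapB EB b)
  have pinsB_bc := obs_pins EB.img EB.R EB.extends_img EB.isTree hnlB hbc' F.np2 F.np3 F.hbc
    (obs_leaf_edge EB b) heB_bc (hswapB EB c)
  have pinsB_cd := obs_pins EB.img EB.R EB.extends_img EB.isTree hnlB hcd' F.np3 F.np4 F.hcd
    (obs_leaf_edge EB c) heB_cd (hswapB EB d)
  have hpinBb : EB.img.emb (B.parent b) = N.parent b := by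
    rcases pinsB_bc.1 with h | h
    · exact h
    · rcases pinsB_ab.2 with h2 | h2
      · exact absurd (h2.symm.trans h) F.hac
      · exact absurd (h2.symm.trans h) F.hbc
  have hpinBc : EB.img.emb (B.parent c) = N.parent c := by
    rcases pinsB_cd.1 with h | h
    · exact h
    · rcases pinsB_bc.2 with h2 | h2
      · exact absurd (h2.symm.trans h) F.hbd
      · exact absurd (h2.symm.trans h) F.hcd
  have hneB_bc : B.parent b ≠ B.parent c := by
    intro hq
    exact F.hbc (hpinBb.symm.trans (hq ▸ hpinBc))
  have hAdjB_bc : B.graph.Adj (B.parent b) (B.parent c) := pinsB_bc.2.2.1 hneB_bc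
  have hBcd : B.graph.Adj (B.parent c) (B.parent d) ∧ B.parent c ≠ B.parent d := by
    rcases pinsB_cd.2.1 with h | h
    · exfalso
      have hcd2 : B.parent d = B.parent c := EB.img.inj (h.trans hpinBc.symm)
      apply hno3
      exact ⟨b, c, d, ⟨chainA3, obs_isChain3 B hbc' hbd' hcd'
        (Or.inr hAdjB_bc) (Or.inl hcd2.symm)⟩, cherryA, ⟨hcd', hcd2.symm⟩⟩
    · have hne : B.parent c ≠ B.parent d := by
        intro hq
        exact F.hcd (hpinBc.symm.trans (hq ▸ h))
      exact ⟨pinsB_cd.2.2.1 hne, hne⟩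
  have hB_ab : B.parent a = B.parent b ∨ B.graph.Adj (B.parent a) (B.parent b) := by
    rcases pinsB_ab.1 with h | h
    · right
      refine pinsB_ab.2.2.1 (fun hq => F.hab ?_)
      rw [← h, ← hpinBb, hq]
    · left
      exact EB.img.inj (h.trans hpinBb.symm)
  exact ⟨cherryA, chainA3,
    obs_isChain3 B hbc' hbd' hcd' (Or.inr hAdjB_bc) (Or.inr hBcd.1),
    obs_not_pendant3 B hneB_bc hBcd.2,
    obs_isChain4 B hab' hac' had' hbc' hbd' hcd' hB_ab (Or.inr hAdjB_bc) (Or.inr hBcd.1) hneB_bc,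
    obs_not_isChain4 A hparbcA⟩

end ObsCore
/-- Observation `obs:13eateachother`: if `T, T'` cannot be
reduced by Reductions 1–8 and `N` displays both, then for any spanning trees
`R, R'` extending images of `T` resp. `T'`, the generator underlying `N` has at
most one `1|3` side. -/
theorem at_most_one_13_side {X : Type} (T T' : PhyloTree X)
    (hirr : Irred8 T T') (N : PhyloNetwork X)
    (hT : Displays N T) (hT' : Displays N T')
    (E : SpanExt T N) (E' : SpanExt T' N)
    (S₁ S₂ : NSide N)
    (h₁ : ∃ a b c d : X, Side13 E.R E'.R S₁ a b c d)
    (h₂ : ∃ a b c d : X, Side13 E.R E'.R S₂ a b c d) :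
    S₁.edgeSet = S₂.edgeSet := by
  classical
  obtain ⟨a, b, c, d, hsup1, hcase1⟩ := h₁
  obtain ⟨a', b', c', d', hsup2, hcase2⟩ := h₂
  by_contra hne
  have F1 := obs_mkSF N S₁ a b c d hsup1
  have F2 := obs_mkSF N S₂ a' b' c' d' hsup2
  have hdisj : Disjoint ({b, c, d} : Set X) ({b', c', d'} : Set X) := by
    rw [Set.disjoint_left]
    intro x hx hx'
    simp only [Set.mem_insert_iff, Set.mem_singleton_iff] at hx hx'
    rcases hx with rfl | rfl | rfl <;> rcases hx' with h | h | h
    · exact hne (obs_share22 F1 F2 (by rw [h]))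
    · exact hne (obs_share23 F1 F2 (by rw [h]))
    · exact obs_share24 F1 F2 (by rw [h])
    · exact hne (obs_share23 F2 F1 (by rw [h])).symm
    · exact hne (obs_share33 F1 F2 (by rw [h]))
    · exact obs_share34 F1 F2 (by rw [h])
    · exact obs_share24 F2 F1 (by rw [h])
    · exact obs_share34 F2 F1 (by rw [h])
    · exact hne (obs_share44 F1 F2 (by rw [h]))
  have hchain2 : T.isChain [b', c', d'] ∧ T'.isChain [b', c', d'] := by
    rcases hcase2 with ⟨hom2, hcov2⟩ | ⟨hom2, hcov2⟩
    · have hc := obs_core T T' N E E' S₂ a' b' c' d' hsup2 hom2 hcov2 hirr.1.2.2.1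
      exact ⟨hc.2.1, hc.2.2.1⟩
    · have hc := obs_core T' T N E' E S₂ a' b' c' d' hsup2 hom2 hcov2 hirr.1.2.2.2.1
      exact ⟨hc.2.2.1, hc.2.1⟩
  rcases hcase1 with ⟨hom1, hcov1⟩ | ⟨hom1, hcov1⟩
  · have hc := obs_core T T' N E E' S₁ a b c d hsup1 hom1 hcov1 hirr.1.2.2.1
    obtain ⟨hcherry, hchA, hchB, hnpend, hch4, hnch4⟩ := hc
    exact hirr.2 ⟨a, b, c, d, b', c', d', Or.inr
      ⟨⟨hchB, hchA⟩, ⟨hchain2.2, hchain2.1⟩, hdisj, hcherry, hnpend, hch4, hnch4⟩⟩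
  · have hc := obs_core T' T N E' E S₁ a b c d hsup1 hom1 hcov1 hirr.1.2.2.2.1
    obtain ⟨hcherry, hchA, hchB, hnpend, hch4, hnch4⟩ := hc
    exact hirr.2 ⟨a, b, c, d, b', c', d', Or.inl
      ⟨⟨hchB, hchA⟩, ⟨hchain2.1, hchain2.2⟩, hdisj, hcherry, hnpend, hch4, hnch4⟩⟩
end

section
/- Let T and T' be unrooted binary phylogenetic trees on X that cannot be reduced under Reductions 1–7, let G be the generator underlying an unrooted binary phylogenetic network N on X that displays T and T' with r(N) = d_TBR(T,T'), and let S be a side of G. If at least three taxa are attached to S in obtaining N from G, then T and T' have a CPT-eligible common chain, unless S is a 1|1|1 side. -/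
open SimpleGraph

namespace ChainAux

variable {V : Type*} {G : SimpleGraph V}

theorem walk_support_get? {u v : V} (p : G.Walk u v) :
    ∀ i, i ≤ p.length → p.support[i]? = some (p.getVert i) := by
  induction p with
  | nil =>
    intro i hi
    simp only [SimpleGraph.Walk.length_nil, Nat.le_zero] at hi
    subst hi; rfl
  | cons h q ih =>
    intro i hi
    match i with
    | 0 => rfl
    | (n+1) =>
      have := ih n (by simpa using hi)
      simpa [SimpleGraph.Walk.support_cons, SimpleGraph.Walk.getVert_cons_succ] using this

theorem walk_edge_mem {u v : V} (p : G.Walk u v) :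
    ∀ i, i < p.length → s(p.getVert i, p.getVert (i+1)) ∈ p.edges := by
  induction p with
  | nil => intro i hi; simp at hi
  | cons h q ih =>
    intro i hi
    match i with
    | 0 =>
      simp [SimpleGraph.Walk.edges_cons, SimpleGraph.Walk.getVert_cons_succ,
        SimpleGraph.Walk.getVert_zero]
    | (n+1) =>
      have := ih n (by simpa using hi)
      simp only [SimpleGraph.Walk.edges_cons, SimpleGraph.Walk.getVert_cons_succ]
      exact List.mem_cons_of_mem _ this

theorem walk_edges_index {u v : V} (p : G.Walk u v) :
    ∀ e ∈ p.edges, ∃ i, i < p.length ∧ e = s(p.getVert i, p.getVert (i+1)) := by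
  induction p with
  | nil => intro e he; simp at he
  | cons h q ih =>
    intro e he
    rw [SimpleGraph.Walk.edges_cons] at he
    rcases List.mem_cons.mp he with rfl | he'
    · exact ⟨0, by simp, by simp [SimpleGraph.Walk.getVert_cons_succ]⟩
    · obtain ⟨i, hi, rfl⟩ := ih e he'
      exact ⟨i+1, by simpa using Nat.succ_lt_succ hi, by
        simp [SimpleGraph.Walk.getVert_cons_succ]⟩

theorem crossing {D : Set V} {u v : V} (p : G.Walk u v) (hu : u ∉ D) (hv : v ∈ D) :
    ∃ a b, G.Adj a b ∧ a ∉ D ∧ b ∈ D := by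
  induction p with
  | nil => exact absurd hv hu
  | cons h q ih =>
    rename_i x y z
    by_cases hm : y ∈ D
    · exact ⟨_, _, h, hu, hm⟩
    · exact ih hm hv

theorem reach_of_mem_support {u v w : V} (p : G.Walk u v) (h : w ∈ p.support) :
    G.Reachable w v := by
  classical
  exact ⟨p.dropUntil w h⟩

theorem closed_pair {a b : V} (ha : G.neighborSet a = {b}) (hb : G.neighborSet b = {a}) :
    ∀ {c : V}, G.Reachable a c → c = a ∨ c = b := by
  have key : ∀ {x c : V} (_ : G.Walk x c), x = a ∨ x = b → c = a ∨ c = b := by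
    intro x c p
    induction p with
    | nil => exact fun h => h
    | cons hadj q ih =>
      rename_i xx yy zz
      intro hx
      apply ih
      rcases hx with rfl | rfl
      · have : yy ∈ G.neighborSet xx := hadj
        rw [ha] at this; right; exact this
      · have : yy ∈ G.neighborSet xx := hadj
        rw [hb] at this; left; exact this
  intro c hr
  exact key hr.some (Or.inl rfl)

theorem support_of_length_four {u v : V} (p : G.Walk u v) (h : p.length = 4) :
    p.support = [p.getVert 0, p.getVert 1, p.getVert 2, p.getVert 3, p.getVert 4] := by
  have hlen : p.support.length = 5 := by rw [SimpleGraph.Walk.length_support, h]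
  apply List.ext_getElem?
  intro n
  match n with
  | 0 => rw [walk_support_get? p 0 (by omega)]; rfl
  | 1 => rw [walk_support_get? p 1 (by omega)]; rfl
  | 2 => rw [walk_support_get? p 2 (by omega)]; rfl
  | 3 => rw [walk_support_get? p 3 (by omega)]; rfl
  | 4 => rw [walk_support_get? p 4 (by omega)]; rfl
  | (n+5) =>
    rw [List.getElem?_eq_none (by omega), List.getElem?_eq_none (by simp)]

end ChainAux

namespace ChainAux

variable {X : Type}

theorem PT_nbhd (T : PhyloTree X) (x : X) :
    T.graph.neighborSet (T.leaf x) = {T.parent x} :=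
  (Set.ncard_eq_one.mp (T.deg_leaf x)).choose_spec

theorem PT_adj (T : PhyloTree X) (x : X) : T.graph.Adj (T.leaf x) (T.parent x) := by
  have h : T.parent x ∈ T.graph.neighborSet (T.leaf x) := by rw [PT_nbhd]; rfl
  exact h

theorem PT_eq_parent (T : PhyloTree X) {x : X} {v : T.V}
    (h : T.graph.Adj (T.leaf x) v) : v = T.parent x := by
  have hv : v ∈ T.graph.neighborSet (T.leaf x) := h
  rw [PT_nbhd] at hv
  exact hv

theorem PN_nbhd (N : PhyloNetwork X) (x : X) :
    N.graph.neighborSet (N.leaf x) = {N.parent x} :=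
  (Set.ncard_eq_one.mp (N.deg_leaf x)).choose_spec

theorem PN_adj (N : PhyloNetwork X) (x : X) : N.graph.Adj (N.leaf x) (N.parent x) := by
  have h : N.parent x ∈ N.graph.neighborSet (N.leaf x) := by rw [PN_nbhd]; rfl
  exact h

theorem PN_eq_parent (N : PhyloNetwork X) {x : X} {v : N.V}
    (h : N.graph.Adj (N.leaf x) v) : v = N.parent x := by
  have hv : v ∈ N.graph.neighborSet (N.leaf x) := h
  rw [PN_nbhd] at hv
  exact hv

theorem parent_not_leaf (T : PhyloTree X) {x1 x2 x3 : X}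
    (h12 : x1 ≠ x2) (h13 : x1 ≠ x3) (h23 : x2 ≠ x3) (t : X) :
    T.parent t ∉ Set.range T.leaf := by
  rintro ⟨y, hy⟩
  have hadj : T.graph.Adj (T.leaf t) (T.leaf y) := by rw [hy]; exact PT_adj T t
  have hty : t ≠ y := by rintro rfl; exact T.graph.loopless.irrefl _ hadj
  have hnb1 : T.graph.neighborSet (T.leaf t) = {T.leaf y} := by rw [PT_nbhd, ← hy]
  have hpy : T.leaf t = T.parent y := PT_eq_parent T hadj.symm
  have hnb2 : T.graph.neighborSet (T.leaf y) = {T.leaf t} := by rw [PT_nbhd, ← hpy]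
  have hz : ∃ z : X, z ≠ t ∧ z ≠ y := by
    by_cases h1 : x1 ≠ t ∧ x1 ≠ y
    · exact ⟨x1, h1⟩
    by_cases h2 : x2 ≠ t ∧ x2 ≠ y
    · exact ⟨x2, h2⟩
    by_cases h3 : x3 ≠ t ∧ x3 ≠ y
    · exact ⟨x3, h3⟩
    push_neg at h1 h2 h3
    by_cases e1 : x1 = t
    · by_cases e2 : x2 = t
      · exact absurd (e1.trans e2.symm) h12
      · have f2 := h2 e2
        by_cases e3 : x3 = t
        · exact absurd (e1.trans e3.symm) h13
        · exact absurd (f2.trans (h3 e3).symm) h23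
    · have f1 := h1 e1
      by_cases e2 : x2 = t
      · by_cases e3 : x3 = t
        · exact absurd (e2.trans e3.symm) h23
        · exact absurd (f1.trans (h3 e3).symm) h13
      · exact absurd (f1.trans (h2 e2).symm) h12
  obtain ⟨z, hz1, hz2⟩ := hz
  have hr : T.graph.Reachable (T.leaf t) (T.leaf z) :=
    T.isTree.isConnected.preconnected _ _
  rcases closed_pair hnb1 hnb2 hr with h | h
  · exact hz1 (T.leaf_inj h)
  · exact hz2 (T.leaf_inj h)

theorem leafEdge_ne (T : PhyloTree X) {a b : X} (hab : a ≠ b)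
    (hpa : T.parent a ∉ Set.range T.leaf) :
    s(T.leaf a, T.parent a) ≠ s(T.leaf b, T.parent b) := by
  intro h
  rcases Sym2.eq_iff.mp h with ⟨h1, _⟩ | ⟨_, h2⟩
  · exact hab (T.leaf_inj h1)
  · exact hpa ⟨b, h2.symm⟩

variable {T : PhyloTree X} {N : PhyloNetwork X}

/-- The image walk of the pendant edge of leaf `x`. -/
noncomputable def LW (I : TreeImage T N) (x : X) :
    N.graph.Walk (I.emb (T.leaf x)) (I.emb (T.parent x)) :=
  I.walk (PT_adj T x)

theorem LW_not_nil (I : TreeImage T N) (x : X) : ¬ (LW I x).Nil :=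
  SimpleGraph.Walk.not_nil_of_ne (fun h => (PT_adj T x).ne (I.inj h))

theorem LW_pos (I : TreeImage T N) (x : X) : 0 < (LW I x).length :=
  SimpleGraph.Walk.not_nil_iff_lt_length.mp (LW_not_nil I x)

theorem LW_one (I : TreeImage T N) (x : X) : (LW I x).getVert 1 = N.parent x := by
  have h := SimpleGraph.Walk.adj_snd (LW_not_nil I x)
  have h2 : (LW I x).getVert 1 ∈ N.graph.neighborSet (N.leaf x) := by
    rw [← I.leaf_map x]; exact h
  rw [PN_nbhd] at h2
  exact h2

theorem parent_mem_LW (I : TreeImage T N) (x : X) :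
    N.parent x ∈ (LW I x).support :=
  SimpleGraph.Walk.mem_support_iff_exists_getVert.mpr ⟨1, LW_one I x, LW_pos I x⟩

theorem walk_edges_memI (I : TreeImage T N) {u v : T.V} (h : T.graph.Adj u v)
    {e : Sym2 N.V} (he : e ∈ (I.walk h).edges) : e ∈ I.edges :=
  ⟨u, v, h, he⟩

theorem LW_first_edge (I : TreeImage T N) (x : X) :
    s(N.leaf x, N.parent x) ∈ (LW I x).edges := by
  have h := walk_edge_mem (LW I x) 0 (LW_pos I x)
  rw [← LW_one I x, ← I.leaf_map x]
  simpa using h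

end ChainAux

namespace ChainAux

variable {X : Type} {T : PhyloTree X} {N : PhyloNetwork X}

theorem lemCore (I : TreeImage T N) {a b : X}
    (hpaN : N.parent a ∉ Set.range N.leaf) (hpbN : N.parent b ∉ Set.range N.leaf)
    (hpaT : T.parent a ∉ Set.range T.leaf) (hpbT : T.parent b ∉ Set.range T.leaf)
    (he : s(N.parent a, N.parent b) ∈ I.edges) :
    T.parent a = T.parent b ∨
      (N.parent a = I.emb (T.parent a) ∧ N.parent b = I.emb (T.parent b) ∧
        T.graph.Adj (T.parent a) (T.parent b)) := by
  obtain ⟨u, v, huv, hmem⟩ := he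
  have hadjN : N.graph.Adj (N.parent a) (N.parent b) :=
    SimpleGraph.Walk.adj_of_mem_edges _ hmem
  have hab : a ≠ b := by rintro rfl; exact N.graph.loopless.irrefl _ hadjN
  have hWa : s(N.parent a, N.parent b) ∈ (LW I a).edges → T.parent a = T.parent b := by
    intro hm
    have hsup : N.parent b ∈ (LW I a).support :=
      SimpleGraph.Walk.snd_mem_support_of_mem_edges _ hm
    have d1 := I.internally_disjoint (PT_adj T b) (PT_adj T a)
      (leafEdge_ne T hab.symm hpbT) (N.parent b) (parent_mem_LW I b) hsup
    have hb1 : N.parent b = I.emb (T.parent a) := by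
      rcases d1 with h | h
      · exfalso; rw [I.leaf_map] at h; exact hpbN ⟨a, h.symm⟩
      · exact h
    have d2 := I.internally_disjoint (PT_adj T a) (PT_adj T b)
      (leafEdge_ne T hab hpaT) (N.parent b) hsup (parent_mem_LW I b)
    have hb2 : N.parent b = I.emb (T.parent b) := by
      rcases d2 with h | h
      · exfalso; rw [I.leaf_map] at h; exact hpbN ⟨b, h.symm⟩
      · exact h
    exact I.inj (hb1.symm.trans hb2)
  have hWb : s(N.parent a, N.parent b) ∈ (LW I b).edges → T.parent a = T.parent b := by
    intro hm
    have hsup : N.parent a ∈ (LW I b).support :=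
      SimpleGraph.Walk.fst_mem_support_of_mem_edges _ hm
    have d1 := I.internally_disjoint (PT_adj T a) (PT_adj T b)
      (leafEdge_ne T hab hpaT) (N.parent a) (parent_mem_LW I a) hsup
    have ha1 : N.parent a = I.emb (T.parent b) := by
      rcases d1 with h | h
      · exfalso; rw [I.leaf_map] at h; exact hpaN ⟨b, h.symm⟩
      · exact h
    have d2 := I.internally_disjoint (PT_adj T b) (PT_adj T a)
      (leafEdge_ne T hab.symm hpbT) (N.parent a) hsup (parent_mem_LW I a)
    have ha2 : N.parent a = I.emb (T.parent a) := by
      rcases d2 with h | h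
      · exfalso; rw [I.leaf_map] at h; exact hpaN ⟨a, h.symm⟩
      · exact h
    exact I.inj (ha2.symm.trans ha1)
  by_cases hca : s(u, v) = s(T.leaf a, T.parent a)
  · left
    apply hWa
    rcases Sym2.eq_iff.mp hca with ⟨h1, h2⟩ | ⟨h1, h2⟩
    · subst h1; subst h2; exact hmem
    · subst h1; subst h2
      have hmem' : s(N.parent a, N.parent b) ∈ (I.walk (PT_adj T a).symm).edges := hmem
      rw [I.walk_symm (PT_adj T a), SimpleGraph.Walk.edges_reverse,
        List.mem_reverse] at hmem'
      exact hmem'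
  · by_cases hcb : s(u, v) = s(T.leaf b, T.parent b)
    · left
      apply hWb
      rcases Sym2.eq_iff.mp hcb with ⟨h1, h2⟩ | ⟨h1, h2⟩
      · subst h1; subst h2; exact hmem
      · subst h1; subst h2
        have hmem' : s(N.parent a, N.parent b) ∈ (I.walk (PT_adj T b).symm).edges := hmem
        rw [I.walk_symm (PT_adj T b), SimpleGraph.Walk.edges_reverse,
          List.mem_reverse] at hmem'
        exact hmem'
    · have hsa : N.parent a ∈ (I.walk huv).support :=
        SimpleGraph.Walk.fst_mem_support_of_mem_edges _ hmem
      have hsb : N.parent b ∈ (I.walk huv).support :=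
        SimpleGraph.Walk.snd_mem_support_of_mem_edges _ hmem
      have d1 := I.internally_disjoint huv (PT_adj T a) hca (N.parent a) hsa
        (parent_mem_LW I a)
      have ha' : N.parent a = I.emb (T.parent a) := by
        rcases d1 with h | h
        · exfalso; rw [I.leaf_map] at h; exact hpaN ⟨a, h.symm⟩
        · exact h
      have d2 := I.internally_disjoint huv (PT_adj T b) hcb (N.parent b) hsb
        (parent_mem_LW I b)
      have hb' : N.parent b = I.emb (T.parent b) := by
        rcases d2 with h | h
        · exfalso; rw [I.leaf_map] at h; exact hpbN ⟨b, h.symm⟩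
        · exact h
      have d3 := I.internally_disjoint (PT_adj T a) huv (fun hh => hca hh.symm)
        (N.parent a) (parent_mem_LW I a) hsa
      have d4 := I.internally_disjoint (PT_adj T b) huv (fun hh => hcb hh.symm)
        (N.parent b) (parent_mem_LW I b) hsb
      right
      refine ⟨ha', hb', ?_⟩
      have hne' : N.parent a ≠ N.parent b := hadjN.ne
      rcases d3 with h3 | h3 <;> rcases d4 with h4 | h4
      · exact absurd (h3.trans h4.symm) hne'
      · have e1 : T.parent a = u := I.inj (ha'.symm.trans h3)
        have e2 : T.parent b = v := I.inj (hb'.symm.trans h4)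
        rw [e1, e2]; exact huv
      · have e1 : T.parent a = v := I.inj (ha'.symm.trans h3)
        have e2 : T.parent b = u := I.inj (hb'.symm.trans h4)
        rw [e1, e2]; exact huv.symm
      · exact absurd (h3.trans h4.symm) hne'

theorem lemA (I : TreeImage T N) {a b : X}
    (hpaN : N.parent a ∉ Set.range N.leaf) (hpbN : N.parent b ∉ Set.range N.leaf)
    (hpaT : T.parent a ∉ Set.range T.leaf) (hpbT : T.parent b ∉ Set.range T.leaf)
    (he : s(N.parent a, N.parent b) ∈ I.edges) :
    T.parent a = T.parent b ∨ T.graph.Adj (T.parent a) (T.parent b) := by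
  rcases lemCore I hpaN hpbN hpaT hpbT he with h | ⟨_, _, h⟩
  · exact Or.inl h
  · exact Or.inr h

theorem lemB (I : TreeImage T N) {a b : X} {q : N.V}
    (hpaN : N.parent a ∉ Set.range N.leaf) (hpbN : N.parent b ∉ Set.range N.leaf)
    (hpaT : T.parent a ∉ Set.range T.leaf) (hpbT : T.parent b ∉ Set.range T.leaf)
    (he : s(N.parent a, N.parent b) ∈ I.edges)
    (hq : N.graph.Adj (N.parent b) q) (hqa : q ≠ N.parent a)
    (hqr : q ∉ Set.range N.leaf) (hmiss : s(N.parent b, q) ∉ I.edges) :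
    T.parent a = T.parent b := by
  haveI := N.finV
  rcases lemCore I hpaN hpbN hpaT hpbT he with h | ⟨ha', hb', _⟩
  · exact h
  exfalso
  have hadjN : N.graph.Adj (N.parent a) (N.parent b) := by
    obtain ⟨u, v, huv, hmem⟩ := he
    exact SimpleGraph.Walk.adj_of_mem_edges _ hmem
  obtain ⟨w1, w2, w3, h12, h13, h23, hset⟩ :=
    Set.ncard_eq_three.mp (T.deg_internal (T.parent b) hpbT)
  have ha1 : T.graph.Adj (T.parent b) w1 := by
    have : w1 ∈ T.graph.neighborSet (T.parent b) := by rw [hset]; simp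
    exact this
  have ha2 : T.graph.Adj (T.parent b) w2 := by
    have : w2 ∈ T.graph.neighborSet (T.parent b) := by rw [hset]; simp
    exact this
  have ha3 : T.graph.Adj (T.parent b) w3 := by
    have : w3 ∈ T.graph.neighborSet (T.parent b) := by rw [hset]; simp
    exact this
  -- basic facts about the walks of edges at `T.parent b`
  have hpos : ∀ {w : T.V} (hw : T.graph.Adj (T.parent b) w), 0 < (I.walk hw).length := by
    intro w hw
    exact SimpleGraph.Walk.not_nil_iff_lt_length.mp
      (SimpleGraph.Walk.not_nil_of_ne (fun hh => hw.ne (I.inj hh)))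
  have hymem : ∀ {w : T.V} (hw : T.graph.Adj (T.parent b) w),
      (I.walk hw).getVert 1 ∈ (I.walk hw).support := by
    intro w hw
    exact SimpleGraph.Walk.mem_support_iff_exists_getVert.mpr ⟨1, rfl, hpos hw⟩
  have hyadj : ∀ {w : T.V} (hw : T.graph.Adj (T.parent b) w),
      N.graph.Adj (N.parent b) ((I.walk hw).getVert 1) := by
    intro w hw
    rw [hb']
    exact SimpleGraph.Walk.adj_snd (p := I.walk hw)
      (SimpleGraph.Walk.not_nil_of_ne (fun hh => hw.ne (I.inj hh)))
  -- distinctness of the second vertices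
  have key : ∀ {wi wj : T.V} (hi : T.graph.Adj (T.parent b) wi)
      (hj : T.graph.Adj (T.parent b) wj), wi ≠ wj →
      (I.walk hi).getVert 1 ≠ (I.walk hj).getVert 1 := by
    intro wi wj hi hj hne heq
    have hne2 : s(T.parent b, wi) ≠ s(T.parent b, wj) := by
      intro hh
      rcases Sym2.eq_iff.mp hh with ⟨_, h2⟩ | ⟨h1, _⟩
      · exact hne h2
      · exact hj.ne h1
    have hsupj : (I.walk hi).getVert 1 ∈ (I.walk hj).support := by
      rw [heq]; exact hymem hj
    have d := I.internally_disjoint hi hj hne2 _ (hymem hi) hsupj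
    rcases d with h | h
    · exact (hyadj hi).ne' (by rw [h, ← hb'])
    · have hsupi : (I.walk hj).getVert 1 ∈ (I.walk hi).support := by
        rw [← heq]; exact hymem hi
      have d' := I.internally_disjoint hj hi hne2.symm _ (hymem hj) hsupi
      rcases d' with h' | h' 
      · exact (hyadj hj).ne' (by rw [h', ← hb'])
      · exact hne (I.inj (h'.symm.trans (heq.symm.trans h)))
  -- identify the neighborhood of `N.parent b`
  have hnbb : N.graph.neighborSet (N.parent b) = {N.leaf b, N.parent a, q} := by
    refine (Set.eq_of_subset_of_ncard_le ?_ ?_ (Set.toFinite _)).symm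
    · intro z hz
      simp only [Set.mem_insert_iff, Set.mem_singleton_iff] at hz
      rcases hz with rfl | rfl | rfl
      · exact (PN_adj N b).symm
      · exact hadjN.symm
      · exact hq
    · rw [N.deg_internal _ hpbN]
      rw [Set.ncard_insert_of_notMem (by
        simp only [Set.mem_insert_iff, Set.mem_singleton_iff]
        push_neg
        exact ⟨fun hh => hpaN ⟨b, hh⟩, fun hh => hqr ⟨b, hh⟩⟩),
        Set.ncard_pair (Ne.symm hqa)]
  have hymemset : ∀ {w : T.V} (hw : T.graph.Adj (T.parent b) w),
      (I.walk hw).getVert 1 = N.leaf b ∨ (I.walk hw).getVert 1 = N.parent a ∨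
        (I.walk hw).getVert 1 = q := by
    intro w hw
    have : (I.walk hw).getVert 1 ∈ N.graph.neighborSet (N.parent b) := hyadj hw
    rw [hnbb] at this
    simpa using this
  -- if some second vertex equals `q`, contradiction with `hmiss`
  have fin : ∀ {w : T.V} (hw : T.graph.Adj (T.parent b) w),
      (I.walk hw).getVert 1 ≠ q := by
    intro w hw hh
    have hmem0 := walk_edge_mem (I.walk hw) 0 (hpos hw)
    apply hmiss
    have heq : s(N.parent b, q) =
        s((I.walk hw).getVert 0, (I.walk hw).getVert (0 + 1)) := by
      rw [SimpleGraph.Walk.getVert_zero, hb', ← hh]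
    rw [heq]
    exact walk_edges_memI I hw hmem0
  have k12 := key ha1 ha2 h12
  have k13 := key ha1 ha3 h13
  have k23 := key ha2 ha3 h23
  rcases hymemset ha1 with e1 | e1 | e1 <;>
    rcases hymemset ha2 with e2 | e2 | e2 <;>
      rcases hymemset ha3 with e3 | e3 | e3 <;>
        first
          | exact fin ha1 e1
          | exact fin ha2 e2
          | exact fin ha3 e3
          | exact k12 (e1.trans e2.symm)
          | exact k13 (e1.trans e3.symm)
          | exact k23 (e2.trans e3.symm)

end ChainAux

namespace ChainAux

open SimpleGraph

variable {X : Type} {T : PhyloTree X} {N : PhyloNetwork X}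

theorem reach_emb (I : TreeImage T N) (x y : T.V) :
    (SimpleGraph.fromEdgeSet I.edges).Reachable (I.emb x) (I.emb y) := by
  have hgen : ∀ {x y : T.V} (_ : T.graph.Walk x y),
      (SimpleGraph.fromEdgeSet I.edges).Reachable (I.emb x) (I.emb y) := by
    intro x y p
    induction p with
    | nil => exact Reachable.refl _
    | cons h q ih =>
      refine Reachable.trans ?_ ih
      refine ⟨(I.walk h).transfer _ ?_⟩
      intro e he
      rw [SimpleGraph.edgeSet_fromEdgeSet]
      exact ⟨walk_edges_memI I h he,
        SimpleGraph.not_isDiag_of_mem_edgeSet _ (SimpleGraph.Walk.edges_subset_edgeSet _ he)⟩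
  exact hgen (T.isTree.isConnected.preconnected x y).some

theorem reach_parent (I : TreeImage T N) (a : X) :
    (SimpleGraph.fromEdgeSet I.edges).Reachable (N.parent a) (I.emb (T.parent a)) := by
  have hW : ∀ e ∈ (LW I a).edges, e ∈ (SimpleGraph.fromEdgeSet I.edges).edgeSet := by
    intro e he
    rw [SimpleGraph.edgeSet_fromEdgeSet]
    exact ⟨⟨_, _, PT_adj T a, he⟩,
      SimpleGraph.not_isDiag_of_mem_edgeSet _ (SimpleGraph.Walk.edges_subset_edgeSet _ he)⟩
  apply reach_of_mem_support ((LW I a).transfer _ hW)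
  rw [SimpleGraph.Walk.support_transfer]
  exact parent_mem_LW I a

theorem lemD (E : SpanExt T N) {a b : X} (hne : N.parent a ≠ N.parent b)
    (he : s(N.parent a, N.parent b) ∈ E.R) : s(N.parent a, N.parent b) ∈ E.img.edges := by
  classical
  by_contra hni
  have hreach : (SimpleGraph.fromEdgeSet E.img.edges).Reachable (N.parent a) (N.parent b) :=
    ((reach_parent E.img a).trans (reach_emb E.img (T.parent a) (T.parent b))).trans
      (reach_parent E.img b).symm
  obtain ⟨P0⟩ := hreach
  have hP0e : ∀ e ∈ P0.edges, e ∈ (SimpleGraph.fromEdgeSet E.R).edgeSet := by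
    intro e hee
    have h1 := SimpleGraph.Walk.edges_subset_edgeSet P0 hee
    rw [SimpleGraph.edgeSet_fromEdgeSet] at h1 ⊢
    exact ⟨E.extends_img h1.1, h1.2⟩
  have hP0ne : s(N.parent a, N.parent b) ∉ P0.edges := by
    intro hh
    have h1 := SimpleGraph.Walk.edges_subset_edgeSet P0 hh
    rw [SimpleGraph.edgeSet_fromEdgeSet] at h1
    exact hni h1.1
  have hP1 : s(N.parent a, N.parent b) ∉ ((P0.transfer _ hP0e).toPath).val.edges := by
    intro hh
    have h1 := SimpleGraph.Walk.edges_toPath_subset _ hh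
    rw [SimpleGraph.Walk.edges_transfer] at h1
    exact hP0ne h1
  have hadjR : (SimpleGraph.fromEdgeSet E.R).Adj (N.parent a) (N.parent b) :=
    (SimpleGraph.fromEdgeSet_adj _).mpr ⟨he, hne⟩
  have huniq := E.isTree.IsAcyclic.path_unique ((P0.transfer _ hP0e).toPath)
    (SimpleGraph.Path.singleton hadjR)
  apply hP1
  rw [huniq]
  exact SimpleGraph.Path.mk'_mem_edges_singleton hadjR

end ChainAux

namespace ChainAux

open SimpleGraph

variable {X : Type} {N : PhyloNetwork X}

theorem side_tail_get (S : NSide N) {k : ℕ} (h1 : 1 ≤ k) (h2 : k ≤ S.walk.length) :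
    S.walk.support.tail[k - 1]? = some (S.walk.getVert k) := by
  have h := walk_support_get? S.walk k h2
  rw [S.walk.support_eq_cons] at h
  match k, h1 with
  | (n+1), _ => simpa using h

theorem side_tail_len (S : NSide N) : S.walk.support.tail.length = S.walk.length := by
  rw [List.length_tail, SimpleGraph.Walk.length_support]
  omega

theorem side_getVert_ne (S : NSide N) {i j : ℕ} (h1 : 1 ≤ i) (hij : i < j)
    (hj : j ≤ S.walk.length) : S.walk.getVert i ≠ S.walk.getVert j := by
  intro hh
  have gi := side_tail_get S h1 (le_of_lt (lt_of_lt_of_le hij hj))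
  have gj := side_tail_get S (by omega) hj
  rw [hh] at gi
  have hlen := side_tail_len S
  have := List.getElem?_inj (l := S.walk.support.tail) (i := i - 1) (j := j - 1)
    (by omega) S.nodup |>.mp (gi.trans gj.symm)
  omega

theorem side_ne_u (S : NSide N) {k : ℕ} (h1 : 1 ≤ k) (h2 : k ≤ S.walk.length - 1) :
    S.walk.getVert k ≠ S.u := by
  intro hh
  have hpos := S.len_pos
  have gk := side_tail_get S h1 (by omega)
  rcases S.no_return with huw | hnot
  · have gl := side_tail_get S (by omega : 1 ≤ S.walk.length) le_rfl
    rw [SimpleGraph.Walk.getVert_length] at gl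
    rw [hh] at gk
    have gk2 : S.walk.support.tail[k - 1]? = some S.w := by rw [gk, huw]
    have hlen := side_tail_len S
    have := List.getElem?_inj (l := S.walk.support.tail) (i := k - 1)
      (j := S.walk.length - 1) (by omega) S.nodup |>.mp (gk2.trans gl.symm)
    omega
  · apply hnot
    rw [hh] at gk
    exact List.mem_of_getElem? gk

theorem side_getVert_mem (S : NSide N) {k : ℕ} (h2 : k ≤ S.walk.length) :
    S.walk.getVert k ∈ S.walk.support :=
  SimpleGraph.Walk.mem_support_iff_exists_getVert.mpr ⟨k, rfl, h2⟩

theorem side_internal' (S : NSide N) {k : ℕ} (h1 : 1 ≤ k) (h2 : k ≤ S.walk.length - 1) :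
    S.walk.getVert k ∉ Set.range N.leaf ∧ ∃ t, N.graph.Adj (S.walk.getVert k) (N.leaf t) := by
  have hpos := S.len_pos
  have hne_w : S.walk.getVert k ≠ S.w := by
    have := side_getVert_ne S h1 (by omega : k < S.walk.length) le_rfl
    rwa [SimpleGraph.Walk.getVert_length] at this
  have h := S.internal _ (side_getVert_mem S (by omega)) (side_ne_u S h1 h2) hne_w
  refine ⟨h.2, ?_⟩
  by_contra hno
  push_neg at hno
  exact h.1 ⟨h.2, hno⟩

theorem side_getVert_not_leaf (S : NSide N) {k : ℕ} (hk : k ≤ S.walk.length) :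
    S.walk.getVert k ∉ Set.range N.leaf := by
  rcases Nat.eq_zero_or_pos k with rfl | h1
  · rw [SimpleGraph.Walk.getVert_zero]; exact S.gu.1
  rcases eq_or_lt_of_le hk with rfl | hlt
  · rw [SimpleGraph.Walk.getVert_length]; exact S.gw.1
  · exact (side_internal' S h1 (by omega)).1

theorem side_parent_eq (S : NSide N) {k : ℕ} {t : X}
    (hadj : N.graph.Adj (S.walk.getVert k) (N.leaf t)) :
    N.parent t = S.walk.getVert k :=
  (PN_eq_parent N hadj.symm).symm

theorem side_nbhd (S : NSide N) {k : ℕ} (h1 : 1 ≤ k) (h2 : k ≤ S.walk.length - 1)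
    (hne3 : S.walk.getVert (k-1) ≠ S.walk.getVert (k+1))
    {t : X} (ht : N.graph.Adj (S.walk.getVert k) (N.leaf t)) :
    N.graph.neighborSet (S.walk.getVert k) =
      {N.leaf t, S.walk.getVert (k-1), S.walk.getVert (k+1)} := by
  haveI := N.finV
  have hpos := S.len_pos
  have hpred : k - 1 + 1 = k := by omega
  have hadj1 : N.graph.Adj (S.walk.getVert k) (S.walk.getVert (k-1)) := by
    have h := S.walk.adj_getVert_succ (i := k-1) (by omega)
    rw [hpred] at h
    exact h.symm
  have hadj2 : N.graph.Adj (S.walk.getVert k) (S.walk.getVert (k+1)) :=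
    S.walk.adj_getVert_succ (by omega)
  have hne1 : N.leaf t ≠ S.walk.getVert (k-1) :=
    fun hh => (side_getVert_not_leaf S (k := k-1) (by omega)) ⟨t, hh⟩
  have hne2 : N.leaf t ≠ S.walk.getVert (k+1) :=
    fun hh => (side_getVert_not_leaf S (k := k+1) (by omega)) ⟨t, hh⟩
  refine (Set.eq_of_subset_of_ncard_le ?_ ?_ (Set.toFinite _)).symm
  · intro z hz
    simp only [Set.mem_insert_iff, Set.mem_singleton_iff] at hz
    rcases hz with rfl | rfl | rfl
    · exact ht
    · exact hadj1
    · exact hadj2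
  · rw [N.deg_internal _ ((side_internal' S h1 h2).1)]
    rw [Set.ncard_insert_of_notMem (by
      simp only [Set.mem_insert_iff, Set.mem_singleton_iff]
      push_neg
      exact ⟨hne1, hne2⟩), Set.ncard_pair hne3]

theorem side_prev_next_ne (S : NSide N) (hlen : 4 ≤ S.walk.length) {k : ℕ}
    (h1 : 1 ≤ k) (h2 : k ≤ S.walk.length - 1) :
    S.walk.getVert (k-1) ≠ S.walk.getVert (k+1) := by
  by_cases hk1 : k = 1
  · subst hk1
    rw [show (1:ℕ) - 1 = 0 from rfl, SimpleGraph.Walk.getVert_zero]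
    exact (side_ne_u S (k := 2) (by omega) (by omega)).symm
  · exact side_getVert_ne S (by omega) (by omega) (by omega)

theorem side_taxon_eq (S : NSide N) {k : ℕ} (h1 : 1 ≤ k) (h2 : k ≤ S.walk.length - 1)
    (hne3 : S.walk.getVert (k-1) ≠ S.walk.getVert (k+1))
    {t t' : X} (ht : N.graph.Adj (S.walk.getVert k) (N.leaf t))
    (ht' : N.graph.Adj (S.walk.getVert k) (N.leaf t')) : t' = t := by
  have h : N.leaf t' ∈ N.graph.neighborSet (S.walk.getVert k) := ht'
  rw [side_nbhd S h1 h2 hne3 ht] at h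
  simp only [Set.mem_insert_iff, Set.mem_singleton_iff] at h
  rcases h with h | h | h
  · exact N.leaf_inj h
  · exact absurd ⟨t', h⟩ (side_getVert_not_leaf S (k := k-1) (by omega))
  · exact absurd ⟨t', h⟩ (side_getVert_not_leaf S (k := k+1) (by omega))

theorem side_len4 (S : NSide N) (h3 : 3 ≤ S.taxa.ncard) : 4 ≤ S.walk.length := by
  haveI := N.finV
  haveI : Finite X := Finite.of_injective N.leaf N.leaf_inj
  by_contra hl
  push_neg at hl
  have hpos := S.len_pos
  set P : ℕ → Set X := fun k => {x | N.parent x = S.walk.getVert k} with hP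
  have hPbound : ∀ k, 1 ≤ k → k ≤ S.walk.length - 1 →
      S.walk.getVert (k-1) ≠ S.walk.getVert (k+1) → (P k).ncard ≤ 1 := by
    intro k hk1 hk2 hne3
    rcases (P k).eq_empty_or_nonempty with hemp | ⟨x0, hx0⟩
    · rw [hemp]; simp
    have hx0' : N.parent x0 = S.walk.getVert k := hx0
    have hadx : N.graph.Adj (S.walk.getVert k) (N.leaf x0) := by
      have h := PN_adj N x0
      rw [hx0'] at h
      exact h.symm
    have hsub : P k ⊆ {x0} := by
      intro y hy
      have hy' : N.parent y = S.walk.getVert k := hy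
      have hady : N.graph.Adj (S.walk.getVert k) (N.leaf y) := by
        have h := PN_adj N y
        rw [hy'] at h
        exact h.symm
      exact side_taxon_eq S hk1 hk2 hne3 hadx hady
    calc (P k).ncard ≤ ({x0} : Set X).ncard := Set.ncard_le_ncard hsub (Set.toFinite _)
      _ = 1 := Set.ncard_singleton x0
  have hPbound2 : ∀ k, 1 ≤ k → k ≤ S.walk.length - 1 → (P k).ncard ≤ 2 := by
    intro k hk1 hk2
    have himg : N.leaf '' P k ⊆
        N.graph.neighborSet (S.walk.getVert k) \ {S.walk.getVert (k-1)} := by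
      rintro z ⟨y, hy, rfl⟩
      have hy' : N.parent y = S.walk.getVert k := hy
      constructor
      · have h := PN_adj N y
        rw [hy'] at h
        exact h.symm
      · intro hz
        simp only [Set.mem_singleton_iff] at hz
        exact (side_getVert_not_leaf S (k := k-1) (by omega)) ⟨y, hz⟩
    have hprevmem : S.walk.getVert (k-1) ∈ N.graph.neighborSet (S.walk.getVert k) := by
      have h := S.walk.adj_getVert_succ (i := k-1) (by omega)
      rw [show k - 1 + 1 = k by omega] at h
      exact h.symm
    calc (P k).ncard = (N.leaf '' P k).ncard :=
        (Set.ncard_image_of_injective _ N.leaf_inj).symm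
      _ ≤ (N.graph.neighborSet (S.walk.getVert k) \ {S.walk.getVert (k-1)}).ncard :=
        Set.ncard_le_ncard himg (Set.toFinite _)
      _ = (N.graph.neighborSet (S.walk.getVert k)).ncard - 1 :=
        Set.ncard_diff_singleton_of_mem hprevmem
      _ ≤ 2 := by rw [N.deg_internal _ ((side_internal' S hk1 hk2).1)]
  have hsub : ∀ t ∈ S.taxa, ∃ k, 1 ≤ k ∧ k ≤ S.walk.length - 1 ∧ t ∈ P k := by
    rintro t ⟨v, hv, hadj⟩
    obtain ⟨idx, hidx, hle⟩ := SimpleGraph.Walk.mem_support_iff_exists_getVert.mp hv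
    have h0 : idx ≠ 0 := by
      rintro rfl
      rw [SimpleGraph.Walk.getVert_zero] at hidx
      exact S.gu.2 t (hidx ▸ hadj)
    have hlast : idx ≠ S.walk.length := by
      rintro rfl
      rw [SimpleGraph.Walk.getVert_length] at hidx
      exact S.gw.2 t (hidx ▸ hadj)
    exact ⟨idx, by omega, by omega, side_parent_eq S (hidx ▸ hadj)⟩
  -- now case on the length
  have hcase : S.walk.length = 1 ∨ S.walk.length = 2 ∨ S.walk.length = 3 := by omega
  rcases hcase with hc | hc | hc
  · have : S.taxa = ∅ := by
      ext t
      simp only [Set.mem_empty_iff_false, iff_false]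
      intro ht
      obtain ⟨k, hk1, hk2, -⟩ := hsub t ht
      omega
    rw [this] at h3
    simp at h3
  · have htsub : S.taxa ⊆ P 1 := by
      intro t ht
      obtain ⟨k, hk1, hk2, hk3⟩ := hsub t ht
      have : k = 1 := by omega
      rwa [this] at hk3
    have := Set.ncard_le_ncard htsub (Set.toFinite _)
    have := hPbound2 1 le_rfl (by omega)
    omega
  · have htsub : S.taxa ⊆ P 1 ∪ P 2 := by
      intro t ht
      obtain ⟨k, hk1, hk2, hk3⟩ := hsub t ht
      have : k = 1 ∨ k = 2 := by omega
      rcases this with rfl | rfl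
      · exact Or.inl hk3
      · exact Or.inr hk3
    have hb1 : (P 1).ncard ≤ 1 := by
      apply hPbound 1 le_rfl (by omega)
      rw [show (1:ℕ) - 1 = 0 from rfl, SimpleGraph.Walk.getVert_zero]
      exact (side_ne_u S (k := 2) (by omega) (by omega)).symm
    have hb2 : (P 2).ncard ≤ 1 := by
      apply hPbound 2 (by omega) (by omega)
      exact side_getVert_ne S (by omega) (by omega) (by omega)
    have hcard := Set.ncard_le_ncard htsub (Set.toFinite _)
    have hun := Set.ncard_union_le (P 1) (P 2)
    omega

end ChainAux

namespace ChainAux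

variable {X : Type}

theorem isChain2 (U : PhyloTree X) {a b : X} (hab : a ≠ b)
    (h : U.parent a = U.parent b ∨ U.graph.Adj (U.parent a) (U.parent b)) :
    U.isChain [a, b] := by
  refine ⟨by simp, by simp [hab], ?_, ?_⟩
  · intro i p q hp hq
    match i, hp, hq with
    | 0, hp, hq =>
      simp only [List.getElem?_cons_zero, List.getElem?_cons_succ] at hp hq
      injection hp with hp
      injection hq with hq
      subst hp; subst hq
      exact h
    | 1, hp, hq => simp at hq
    | (n+2), hp, hq => simp at hp
  · intro i j p q hi hij hj hp hq
    simp only [List.length_cons, List.length_nil] at hj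
    omega

theorem isChain3 (U : PhyloTree X) {a b c : X} (hab : a ≠ b) (hac : a ≠ c) (hbc : b ≠ c)
    (h1 : U.parent a = U.parent b ∨ U.graph.Adj (U.parent a) (U.parent b))
    (h2 : U.parent b = U.parent c ∨ U.graph.Adj (U.parent b) (U.parent c)) :
    U.isChain [a, b, c] := by
  refine ⟨by simp, by simp [hab, hac, hbc], ?_, ?_⟩
  · intro i p q hp hq
    match i, hp, hq with
    | 0, hp, hq =>
      simp only [List.getElem?_cons_zero, List.getElem?_cons_succ] at hp hq
      injection hp with hp
      injection hq with hq
      subst hp; subst hq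
      exact h1
    | 1, hp, hq =>
      simp only [List.getElem?_cons_zero, List.getElem?_cons_succ] at hp hq
      injection hp with hp
      injection hq with hq
      subst hp; subst hq
      exact h2
    | 2, hp, hq => simp at hq
    | (n+3), hp, hq => simp at hp
  · intro i j p q hi hij hj hp hq
    simp only [List.length_cons, List.length_nil] at hj
    omega

theorem mk_chain2 (T T' : PhyloTree X) {a b : X} (hab : a ≠ b)
    (h1 : T.parent a = T.parent b ∨ T.graph.Adj (T.parent a) (T.parent b))
    (h2 : T'.parent a = T'.parent b ∨ T'.graph.Adj (T'.parent a) (T'.parent b)) :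
    commonChain T T' [a, b] :=
  ⟨isChain2 T hab h1, isChain2 T' hab h2⟩

theorem mk_chain3 (T T' : PhyloTree X) {a b c : X} (hab : a ≠ b) (hac : a ≠ c) (hbc : b ≠ c)
    (h1 : T.parent a = T.parent b ∨ T.graph.Adj (T.parent a) (T.parent b))
    (h2 : T.parent b = T.parent c ∨ T.graph.Adj (T.parent b) (T.parent c))
    (h1' : T'.parent a = T'.parent b ∨ T'.graph.Adj (T'.parent a) (T'.parent b))
    (h2' : T'.parent b = T'.parent c ∨ T'.graph.Adj (T'.parent b) (T'.parent c)) :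
    commonChain T T' [a, b, c] :=
  ⟨isChain3 T hab hac hbc h1 h2, isChain3 T' hab hac hbc h1' h2'⟩

end ChainAux

/-- Observation `obs:chainseverywhere`: a side of the
generator underlying an optimal network `N` decorated with at least three taxa
forces a CPT-eligible common chain, unless the side is a `1|1|1` side. -/
theorem three_taxa_side_gives_chain {X : Type} (T T' : PhyloTree X)
    (hirr : Irred7 T T') (N : PhyloNetwork X)
    (hT : Displays N T) (hT' : Displays N T')
    (hopt : N.retic = dTBR T T')
    (E : SpanExt T N) (E' : SpanExt T' N)
    (S : NSide N) (h3 : 3 ≤ S.taxa.ncard)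
    (h111 : ¬ Side111 E.R E'.R S) :
    CPTEligibleChain T T' := by
  classical
  haveI := N.finV
  obtain ⟨t0, _⟩ : S.taxa.Nonempty := Set.nonempty_of_ncard_ne_zero (by omega)
  have hXne : Nonempty X := ⟨t0⟩
  have hlen : 4 ≤ S.walk.length := ChainAux.side_len4 S h3
  have hex : ∀ k, 1 ≤ k → k ≤ S.walk.length - 1 →
      ∃ t, N.graph.Adj (S.walk.getVert k) (N.leaf t) :=
    fun k h1 h2 => (ChainAux.side_internal' S h1 h2).2
  set xf : ℕ → X := fun k =>
    if h : ∃ t, N.graph.Adj (S.walk.getVert k) (N.leaf t) then h.choose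
    else Classical.choice hXne with hxfdef
  have hxf : ∀ k, 1 ≤ k → k ≤ S.walk.length - 1 →
      N.graph.Adj (S.walk.getVert k) (N.leaf (xf k)) := by
    intro k h1 h2
    have h := hex k h1 h2
    rw [hxfdef]
    simp only [dif_pos h]
    exact h.choose_spec
  have hpar : ∀ k, 1 ≤ k → k ≤ S.walk.length - 1 →
      N.parent (xf k) = S.walk.getVert k :=
    fun k h1 h2 => ChainAux.side_parent_eq S (hxf k h1 h2)
  have hxne : ∀ k l, 1 ≤ k → k < l → l ≤ S.walk.length - 1 → xf k ≠ xf l := by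
    intro k l h1 hkl h2 hh
    have heq := hpar k h1 (by omega)
    rw [hh, hpar l (by omega) h2] at heq
    exact ChainAux.side_getVert_ne S h1 hkl (by omega) heq.symm
  have hpnl : ∀ k, 1 ≤ k → k ≤ S.walk.length - 1 →
      N.parent (xf k) ∉ Set.range N.leaf := by
    intro k h1 h2
    rw [hpar k h1 h2]
    exact ChainAux.side_getVert_not_leaf S (by omega)
  have hTnr : ∀ t : X, T.parent t ∉ Set.range T.leaf :=
    ChainAux.parent_not_leaf T (hxne 1 2 (by omega) (by omega) (by omega))
      (hxne 1 3 (by omega) (by omega) (by omega))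
      (hxne 2 3 (by omega) (by omega) (by omega))
  have hT'nr : ∀ t : X, T'.parent t ∉ Set.range T'.leaf :=
    ChainAux.parent_not_leaf T' (hxne 1 2 (by omega) (by omega) (by omega))
      (hxne 1 3 (by omega) (by omega) (by omega))
      (hxne 2 3 (by omega) (by omega) (by omega))
  have hfe : ∀ k, 1 ≤ k → k ≤ S.walk.length - 2 →
      s(S.walk.getVert k, S.walk.getVert (k+1)) =
        s(N.parent (xf k), N.parent (xf (k+1))) := by
    intro k h1 h2
    rw [hpar k h1 (by omega), hpar (k+1) (by omega) (by omega)]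
  have hpne : ∀ k, 1 ≤ k → k ≤ S.walk.length - 2 →
      N.parent (xf k) ≠ N.parent (xf (k+1)) := by
    intro k h1 h2
    rw [hpar k h1 (by omega), hpar (k+1) (by omega) (by omega)]
    exact ChainAux.side_getVert_ne S h1 (by omega) (by omega)
  -- each spanning tree omits at most one edge of the side
  have lemE : ∀ (R : Set (Sym2 N.V)), R ⊆ N.graph.edgeSet →
      (SimpleGraph.fromEdgeSet R).Connected →
      ∀ i j : ℕ, i < j → j ≤ S.walk.length - 1 →
      s(S.walk.getVert i, S.walk.getVert (i+1)) ∉ R →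
      s(S.walk.getVert j, S.walk.getVert (j+1)) ∉ R → False := by
    intro R hsubR hconn i j hij hj hfi hfj
    set D : Set N.V := {v | ∃ k, i+1 ≤ k ∧ k ≤ j ∧
      (v = S.walk.getVert k ∨ v = N.leaf (xf k))} with hD
    have huD : S.u ∉ D := by
      rintro ⟨k, hk1, hk2, hcase | hcase⟩
      · exact ChainAux.side_ne_u S (by omega) (by omega) hcase.symm
      · exact S.gu.1 ⟨xf k, hcase.symm⟩
    have hvD : S.walk.getVert (i+1) ∈ D := ⟨i+1, le_rfl, by omega, Or.inl rfl⟩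
    obtain ⟨p⟩ := hconn.preconnected S.u (S.walk.getVert (i+1))
    obtain ⟨c, d, hadj, hcD, hdD⟩ := ChainAux.crossing p huD hvD
    have hcd : s(c, d) ∈ R := ((SimpleGraph.fromEdgeSet_adj R).mp hadj).1
    have hcdN : N.graph.Adj c d := (N.graph.mem_edgeSet).mp (hsubR hcd)
    obtain ⟨k, hk1, hk2, hcase⟩ := hdD
    rcases hcase with rfl | rfl
    · -- d = getVert k
      have hmem : c ∈ N.graph.neighborSet (S.walk.getVert k) := hcdN.symm
      rw [ChainAux.side_nbhd S (by omega) (by omega)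
        (ChainAux.side_prev_next_ne S hlen (by omega) (by omega))
        (hxf k (by omega) (by omega))] at hmem
      simp only [Set.mem_insert_iff, Set.mem_singleton_iff] at hmem
      rcases hmem with rfl | rfl | rfl
      · exact hcD ⟨k, hk1, hk2, Or.inr rfl⟩
      · -- c = getVert (k-1)
        by_cases hki : k = i + 1
        · subst hki
          exact hfi hcd
        · exact hcD ⟨k-1, by omega, by omega, Or.inl rfl⟩
      · -- c = getVert (k+1)
        by_cases hkj : k = j
        · subst hkj
          exact hfj (by rwa [Sym2.eq_swap] at hcd)
        · exact hcD ⟨k+1, by omega, by omega, Or.inl rfl⟩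
    · -- d = leaf (xf k)
      have hmem : c ∈ N.graph.neighborSet (N.leaf (xf k)) := hcdN.symm
      rw [ChainAux.PN_nbhd] at hmem
      have hc : c = N.parent (xf k) := hmem
      exact hcD ⟨k, hk1, hk2, Or.inl (hc.trans (hpar k (by omega) (by omega)))⟩
  -- relations coming from good edges
  have goodRel : ∀ k, 1 ≤ k → k ≤ S.walk.length - 2 →
      s(S.walk.getVert k, S.walk.getVert (k+1)) ∈ E.R →
      (T.parent (xf k) = T.parent (xf (k+1)) ∨
        T.graph.Adj (T.parent (xf k)) (T.parent (xf (k+1)))) := by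
    intro k h1 h2 hR
    rw [hfe k h1 h2] at hR
    exact ChainAux.lemA E.img (hpnl k h1 (by omega)) (hpnl (k+1) (by omega) (by omega))
      (hTnr _) (hTnr _) (ChainAux.lemD E (hpne k h1 h2) hR)
  have goodRel' : ∀ k, 1 ≤ k → k ≤ S.walk.length - 2 →
      s(S.walk.getVert k, S.walk.getVert (k+1)) ∈ E'.R →
      (T'.parent (xf k) = T'.parent (xf (k+1)) ∨
        T'.graph.Adj (T'.parent (xf k)) (T'.parent (xf (k+1)))) := by
    intro k h1 h2 hR
    rw [hfe k h1 h2] at hR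
    exact ChainAux.lemA E'.img (hpnl k h1 (by omega)) (hpnl (k+1) (by omega) (by omega))
      (hT'nr _) (hT'nr _) (ChainAux.lemD E' (hpne k h1 h2) hR)
  -- pendant constructions
  have pendT : ∀ (a b : X) (q : N.V), a ≠ b →
      N.parent a ∉ Set.range N.leaf → N.parent b ∉ Set.range N.leaf →
      N.parent a ≠ N.parent b →
      s(N.parent a, N.parent b) ∈ E.R → s(N.parent a, N.parent b) ∈ E'.R →
      N.graph.Adj (N.parent b) q → q ≠ N.parent a → q ∉ Set.range N.leaf →
      s(N.parent b, q) ∉ E.R →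
      CPTEligibleChain T T' := by
    intro a b q hab hra hrb hne hR hR' hq hqa hqr hmiss
    have heq : T.parent a = T.parent b :=
      ChainAux.lemB E.img hra hrb (hTnr a) (hTnr b) (ChainAux.lemD E hne hR) hq hqa hqr
        (fun hmem => hmiss (E.extends_img hmem))
    have hrel' := ChainAux.lemA E'.img hra hrb (hT'nr a) (hT'nr b)
      (ChainAux.lemD E' hne hR')
    exact Or.inr ⟨a, b, ChainAux.mk_chain2 T T' hab (Or.inl heq) hrel', Or.inl ⟨hab, heq⟩⟩
  have pendT' : ∀ (a b : X) (q : N.V), a ≠ b →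
      N.parent a ∉ Set.range N.leaf → N.parent b ∉ Set.range N.leaf →
      N.parent a ≠ N.parent b →
      s(N.parent a, N.parent b) ∈ E.R → s(N.parent a, N.parent b) ∈ E'.R →
      N.graph.Adj (N.parent b) q → q ≠ N.parent a → q ∉ Set.range N.leaf →
      s(N.parent b, q) ∉ E'.R →
      CPTEligibleChain T T' := by
    intro a b q hab hra hrb hne hR hR' hq hqa hqr hmiss
    have heq : T'.parent a = T'.parent b :=
      ChainAux.lemB E'.img hra hrb (hT'nr a) (hT'nr b) (ChainAux.lemD E' hne hR') hq hqa hqr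
        (fun hmem => hmiss (E'.extends_img hmem))
    have hrel := ChainAux.lemA E.img hra hrb (hTnr a) (hTnr b)
      (ChainAux.lemD E hne hR)
    exact Or.inr ⟨a, b, ChainAux.mk_chain2 T T' hab hrel (Or.inl heq), Or.inr ⟨hab, heq⟩⟩
  -- helper producing the result from a good edge with an adjacent bad edge on the right
  have stepRight : ∀ k, 1 ≤ k → k ≤ S.walk.length - 2 →
      s(S.walk.getVert k, S.walk.getVert (k+1)) ∈ E.R →
      s(S.walk.getVert k, S.walk.getVert (k+1)) ∈ E'.R →
      (s(S.walk.getVert (k+1), S.walk.getVert (k+2)) ∉ E.R ∨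
       s(S.walk.getVert (k+1), S.walk.getVert (k+2)) ∉ E'.R) →
      CPTEligibleChain T T' := by
    intro k h1 h2 hR hR' hbad
    have hq : N.graph.Adj (N.parent (xf (k+1))) (S.walk.getVert (k+2)) := by
      rw [hpar (k+1) (by omega) (by omega)]
      exact S.walk.adj_getVert_succ (by omega)
    have hqa : S.walk.getVert (k+2) ≠ N.parent (xf k) := by
      rw [hpar k h1 (by omega)]
      exact (ChainAux.side_getVert_ne S h1 (by omega) (by omega)).symm
    have hqr : S.walk.getVert (k+2) ∉ Set.range N.leaf :=
      ChainAux.side_getVert_not_leaf S (by omega)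
    have hmm : s(N.parent (xf (k+1)), S.walk.getVert (k+2)) =
        s(S.walk.getVert (k+1), S.walk.getVert (k+2)) := by
      rw [hpar (k+1) (by omega) (by omega)]
    rcases hbad with hb | hb
    · exact pendT (xf k) (xf (k+1)) (S.walk.getVert (k+2))
        (hxne k (k+1) h1 (by omega) (by omega)) (hpnl k h1 (by omega))
        (hpnl (k+1) (by omega) (by omega)) (hpne k h1 h2)
        (by rw [← hfe k h1 h2]; exact hR) (by rw [← hfe k h1 h2]; exact hR')
        hq hqa hqr (by rw [hmm]; exact hb)
    · exact pendT' (xf k) (xf (k+1)) (S.walk.getVert (k+2))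
        (hxne k (k+1) h1 (by omega) (by omega)) (hpnl k h1 (by omega))
        (hpnl (k+1) (by omega) (by omega)) (hpne k h1 h2)
        (by rw [← hfe k h1 h2]; exact hR) (by rw [← hfe k h1 h2]; exact hR')
        hq hqa hqr (by rw [hmm]; exact hb)
  -- ... and on the left
  have stepLeft : ∀ k, 2 ≤ k → k ≤ S.walk.length - 2 →
      s(S.walk.getVert k, S.walk.getVert (k+1)) ∈ E.R →
      s(S.walk.getVert k, S.walk.getVert (k+1)) ∈ E'.R →
      (s(S.walk.getVert (k-1), S.walk.getVert k) ∉ E.R ∨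
       s(S.walk.getVert (k-1), S.walk.getVert k) ∉ E'.R) →
      CPTEligibleChain T T' := by
    intro k h1 h2 hR hR' hbad
    have hswap : s(N.parent (xf (k+1)), N.parent (xf k)) =
        s(S.walk.getVert k, S.walk.getVert (k+1)) := by
      rw [hfe k (by omega) h2, Sym2.eq_swap]
    have hq : N.graph.Adj (N.parent (xf k)) (S.walk.getVert (k-1)) := by
      rw [hpar k (by omega) (by omega)]
      have h := S.walk.adj_getVert_succ (i := k-1) (by omega)
      rw [show k-1+1 = k by omega] at h
      exact h.symm
    have hqa : S.walk.getVert (k-1) ≠ N.parent (xf (k+1)) := by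
      rw [hpar (k+1) (by omega) (by omega)]
      exact ChainAux.side_getVert_ne S (by omega) (by omega) (by omega)
    have hqr : S.walk.getVert (k-1) ∉ Set.range N.leaf :=
      ChainAux.side_getVert_not_leaf S (by omega)
    have hmm : s(N.parent (xf k), S.walk.getVert (k-1)) =
        s(S.walk.getVert (k-1), S.walk.getVert k) := by
      rw [hpar k (by omega) (by omega), Sym2.eq_swap]
    rcases hbad with hb | hb
    · exact pendT (xf (k+1)) (xf k) (S.walk.getVert (k-1))
        (hxne k (k+1) (by omega) (by omega) (by omega)).symm
        (hpnl (k+1) (by omega) (by omega)) (hpnl k (by omega) (by omega))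
        (hpne k (by omega) h2).symm
        (by rw [hswap]; exact hR) (by rw [hswap]; exact hR')
        hq hqa hqr (by rw [hmm]; exact hb)
    · exact pendT' (xf (k+1)) (xf k) (S.walk.getVert (k-1))
        (hxne k (k+1) (by omega) (by omega) (by omega)).symm
        (hpnl (k+1) (by omega) (by omega)) (hpnl k (by omega) (by omega))
        (hpne k (by omega) h2).symm
        (by rw [hswap]; exact hR) (by rw [hswap]; exact hR')
        hq hqa hqr (by rw [hmm]; exact hb)
  -- main case analysis
  by_cases hgood : ∃ k, 1 ≤ k ∧ k ≤ S.walk.length - 2 ∧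
      s(S.walk.getVert k, S.walk.getVert (k+1)) ∈ E.R ∧
      s(S.walk.getVert k, S.walk.getVert (k+1)) ∈ E'.R
  · obtain ⟨k, hk1, hk2, hkR, hkR'⟩ := hgood
    by_cases hnx : s(S.walk.getVert (k+1), S.walk.getVert (k+2)) ∈ E.R ∧
        s(S.walk.getVert (k+1), S.walk.getVert (k+2)) ∈ E'.R
    · by_cases hk3 : k ≤ S.walk.length - 3
      · -- two consecutive good interior edges: 3-chain
        left
        refine ⟨[xf k, xf (k+1), xf (k+2)], by simp, ?_⟩
        exact ChainAux.mk_chain3 T T'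
          (hxne k (k+1) hk1 (by omega) (by omega))
          (hxne k (k+2) hk1 (by omega) (by omega))
          (hxne (k+1) (k+2) (by omega) (by omega) (by omega))
          (goodRel k hk1 hk2 hkR) (goodRel (k+1) (by omega) (by omega) hnx.1)
          (goodRel' k hk1 hk2 hkR') (goodRel' (k+1) (by omega) (by omega) hnx.2)
      · -- k = length - 2; look at the edge on the left
        have hk4 : k = S.walk.length - 2 := by omega
        by_cases hpv : s(S.walk.getVert (k-1), S.walk.getVert k) ∈ E.R ∧
            s(S.walk.getVert (k-1), S.walk.getVert k) ∈ E'.R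
        · -- edges f (k-1) and f k both good: 3-chain
          left
          refine ⟨[xf (k-1), xf k, xf (k+1)], by simp, ?_⟩
          have hfix : k - 1 + 1 = k := by omega
          have g1 := goodRel (k-1) (by omega) (by omega) (by rw [hfix]; exact hpv.1)
          have g1' := goodRel' (k-1) (by omega) (by omega) (by rw [hfix]; exact hpv.2)
          rw [hfix] at g1 g1'
          exact ChainAux.mk_chain3 T T'
            (hxne (k-1) k (by omega) (by omega) (by omega))
            (hxne (k-1) (k+1) (by omega) (by omega) (by omega))
            (hxne k (k+1) (by omega) (by omega) (by omega))
            g1 (goodRel k hk1 hk2 hkR) g1' (goodRel' k hk1 hk2 hkR')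
        · -- some tree misses the left edge: pendant 2-chain
          rw [not_and_or] at hpv
          exact stepLeft k (by omega) hk2 hkR hkR' hpv
    · rw [not_and_or] at hnx
      exact stepRight k hk1 hk2 hkR hkR' hnx
  · -- every interior edge is missed by one of the trees
    exfalso
    push_neg at hgood
    have hbad : ∀ k, 1 ≤ k → k ≤ S.walk.length - 2 →
        s(S.walk.getVert k, S.walk.getVert (k+1)) ∉ E.R ∨
        s(S.walk.getVert k, S.walk.getVert (k+1)) ∉ E'.R := by
      intro k h1 h2
      by_cases hh : s(S.walk.getVert k, S.walk.getVert (k+1)) ∈ E.R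
      · exact Or.inr (hgood k h1 h2 hh)
      · exact Or.inl hh
    have hconnE := E.isTree.isConnected
    have hconnE' := E'.isTree.isConnected
    rcases le_or_gt 5 S.walk.length with hL5 | hL4
    · have b1 := hbad 1 (by omega) (by omega)
      have b2 := hbad 2 (by omega) (by omega)
      have b3 := hbad 3 (by omega) (by omega)
      rcases b1 with h1 | h1 <;> rcases b2 with h2 | h2 <;> rcases b3 with h3 | h3 <;>
        first
          | exact lemE E.R E.sub hconnE 1 2 (by omega) (by omega) h1 h2
          | exact lemE E.R E.sub hconnE 1 3 (by omega) (by omega) h1 h3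
          | exact lemE E.R E.sub hconnE 2 3 (by omega) (by omega) h2 h3
          | exact lemE E'.R E'.sub hconnE' 1 2 (by omega) (by omega) h1 h2
          | exact lemE E'.R E'.sub hconnE' 1 3 (by omega) (by omega) h1 h3
          | exact lemE E'.R E'.sub hconnE' 2 3 (by omega) (by omega) h2 h3
    · -- length 4 : derive a 1|1|1 side
      have hL4' : S.walk.length = 4 := by omega
      have hsupp : S.walk.support =
          [S.u, N.parent (xf 1), N.parent (xf 2), N.parent (xf 3), S.w] := by
        rw [ChainAux.support_of_length_four S.walk hL4']
        rw [hpar 1 (by omega) (by omega), hpar 2 (by omega) (by omega),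
          hpar 3 (by omega) (by omega)]
        rw [SimpleGraph.Walk.getVert_zero]
        have h4 : S.walk.getVert 4 = S.w := by
          rw [← hL4']
          exact S.walk.getVert_length
        rw [h4]
      have homits : ∀ (R : Set (Sym2 N.V)), R ⊆ N.graph.edgeSet →
          (SimpleGraph.fromEdgeSet R).Connected →
          ∀ m, m ≤ 3 → s(S.walk.getVert m, S.walk.getVert (m+1)) ∉ R →
          omitsOnly R S s(S.walk.getVert m, S.walk.getVert (m+1)) := by
        intro R hsub hconn m hm hnotin
        refine ⟨hnotin, ?_⟩
        intro e he hnee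
        obtain ⟨i, hi, rfl⟩ := ChainAux.walk_edges_index S.walk e he
        by_contra hnot
        have him : i ≠ m := fun hh => hnee (by rw [hh])
        rcases lt_or_gt_of_ne him with hlt | hgt
        · exact lemE R hsub hconn i m hlt (by omega) hnot hnotin
        · exact lemE R hsub hconn m i hgt (by omega) hnotin hnot
      have b1 := hbad 1 (by omega) (by omega)
      have b2 := hbad 2 (by omega) (by omega)
      have hf1 : s(N.parent (xf 1), N.parent (xf 2)) =
          s(S.walk.getVert 1, S.walk.getVert 2) := (hfe 1 (by omega) (by omega)).symm
      have hf2 : s(N.parent (xf 2), N.parent (xf 3)) =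
          s(S.walk.getVert 2, S.walk.getVert 3) := (hfe 2 (by omega) (by omega)).symm
      rcases b1 with h1 | h1 <;> rcases b2 with h2 | h2
      · exact lemE E.R E.sub hconnE 1 2 (by omega) (by omega) h1 h2
      · -- f1 ∉ E.R, f2 ∉ E'.R : first disjunct of Side111
        apply h111
        refine ⟨xf 1, xf 2, xf 3, hsupp, Or.inl ⟨?_, ?_⟩⟩
        · rw [hf1]; exact homits E.R E.sub hconnE 1 (by omega) h1
        · rw [hf2]; exact homits E'.R E'.sub hconnE' 2 (by omega) h2
      · -- f1 ∉ E'.R, f2 ∉ E.R : second disjunct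
        apply h111
        refine ⟨xf 1, xf 2, xf 3, hsupp, Or.inr ⟨?_, ?_⟩⟩
        · rw [hf1]; exact homits E'.R E'.sub hconnE' 1 (by omega) h1
        · rw [hf2]; exact homits E.R E.sub hconnE 2 (by omega) h2
      · exact lemE E'.R E'.sub hconnE' 1 2 (by omega) (by omega) h1 h2
end
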